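/- arXiv:1508.00778 — 6 statements merged into one kernel-verified Lean document; each statement's English description precedes it below -/
import Mathlib

section
/- Let (X,d) be a complete metric space satisfying the weak doubling property with constant c. Then for every compact subset S ⊆ X and every δ > 0, ρ_δ(S) ≤ c·ν_δ(S). -/
open Metric Set

section Defs

variable {X : Type*} [MetricSpace X]

/-- `γ` is a geodesic parametrized by arclength on the interval `[0, l]`. -/
def IsGeodesicMap (γ : ℝ → X) (l : ℝ) : Prop :=
  ∀ s ∈ Set.Icc (0 : ℝ) l, ∀ t ∈ Set.Icc (0 : ℝ) l, dist (γ s) (γ t) = |s - t|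

/-- A geodesic metric space: every pair of points is joined by a geodesic. -/
def IsGeodesicSpace (X : Type*) [MetricSpace X] : Prop :=
  ∀ x y : X, ∃ γ : ℝ → X, IsGeodesicMap γ (dist x y) ∧ γ 0 = x ∧ γ (dist x y) = y

/-- A Busemann space: a geodesic metric space in which the distance between
any two (affinely reparametrized) geodesics is convex. -/
def IsBusemannSpace (X : Type*) [MetricSpace X] : Prop :=
  IsGeodesicSpace X ∧
    ∀ (γ γ' : ℝ → X) (l l' : ℝ), 0 ≤ l → 0 ≤ l' →
      IsGeodesicMap γ l → IsGeodesicMap γ' l' →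
        ∀ t ∈ Set.Icc (0 : ℝ) 1,
          dist (γ (t * l)) (γ' (t * l')) ≤
            (1 - t) * dist (γ 0) (γ' 0) + t * dist (γ l) (γ' l')

/-- A Busemann surface: a Busemann space homeomorphic to the Euclidean plane. -/
def IsBusemannSurface (X : Type*) [MetricSpace X] : Prop :=
  IsBusemannSpace X ∧ Nonempty (X ≃ₜ EuclideanSpace ℝ (Fin 2))

/-- The covering number `ρ_δ(S)`: the least number of closed balls of radius `δ`
(centered at arbitrary points of `X`) needed to cover `S`. -/
noncomputable def covNum (δ : ℝ) (S : Set X) : ℕ∞ :=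
  sInf {n : ℕ∞ | ∃ T : Set X, T.encard = n ∧ S ⊆ ⋃ x ∈ T, Metric.closedBall x δ}

/-- The packing number `ν_δ(S)`: the largest cardinality of a subset `P ⊆ S`
whose points are pairwise at distance `> 2δ`. -/
noncomputable def packNum (δ : ℝ) (S : Set X) : ℕ∞ :=
  sSup {n : ℕ∞ | ∃ P : Set X, P ⊆ S ∧ P.encard = n ∧
    P.Pairwise fun p q => 2 * δ < dist p q}

/-- The geodesic segment `[x,y]` in a (uniquely geodesic) metric space. -/
def seg (x y : X) : Set X := {z | dist x z + dist z y = dist x y}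

/-- A set is (geodesically) convex if it contains the segment between any two of its points. -/
def GConvex (C : Set X) : Prop := ∀ x ∈ C, ∀ y ∈ C, seg x y ⊆ C

/-- The (geodesic) convex hull of a set. -/
def gHull (Q : Set X) : Set X := ⋂₀ {C : Set X | GConvex C ∧ Q ⊆ C}

/-- The triangle `Δ(x,y,z)`: the convex hull of `{x,y,z}`. -/
def triangleG (x y z : X) : Set X := gHull {x, y, z}

/-- The perimeter `π(a,b,c)` of a triangle. -/
def perim (a b c : X) : ℝ := dist a b + dist b c + dist c a

/-- Three points are collinear if one lies on the geodesic segment between the other two. -/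
def CollinearPts (a b c : X) : Prop := b ∈ seg a c ∨ a ∈ seg b c ∨ c ∈ seg a b

/-- A geodesic line: the image of an isometric embedding of `ℝ`. -/
def IsGeodesicLine (L : Set X) : Prop := ∃ γ : ℝ → X, Isometry γ ∧ L = Set.range γ

/-- A closed halfplane determined by the line `L`: the union of `L` with a
connected component of its complement. -/
def IsHalfplane (L H : Set X) : Prop :=
  ∃ p, p ∉ L ∧ H = connectedComponentIn Lᶜ p ∪ L

/-- The line `L` separates `A` from `B`: they lie in different closed halfplanes of `L`. -/
def LineSep (L A B : Set X) : Prop :=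
  ∃ H₁ H₂ : Set X, IsHalfplane L H₁ ∧ IsHalfplane L H₂ ∧ H₁ ≠ H₂ ∧ A ⊆ H₁ ∧ B ⊆ H₂

/-- The shade `Sh_u(x,y)` of the segment `[x,y]` with respect to `u`. -/
def Shade (u x y : X) : Set X :=
  {p | (seg u p ∩ seg x y).Nonempty ∧
    ∃ L : Set X, IsGeodesicLine L ∧ u ∈ L ∧ p ∈ L ∧ LineSep L {x} {y}}

/-- The shade `St_u(x,y,z)` of the triangle `Δ(x,y,z)` with respect to `u`. -/
def TriShade (u x y z : X) : Set X := Shade u x y ∪ Shade u y z ∪ Shade u z x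

end Defs

/-- The weak doubling property with constant `c`. -/
def WeakDoubling (X : Type*) [MetricSpace X] (c : ℕ) : Prop :=
  ∀ δ : ℝ, 0 < δ → ∀ S : Set X, IsCompact S → S.Nonempty →
    ∃ v ∈ S, covNum δ (Metric.closedBall v (2 * δ) ∩ S) ≤ (c : ℕ∞)

/-!
Induct on a bound `n` for the packing number of a compact set `K`. Weak doubling yields `v ∈ K`
such that `c` balls cover the points of `K` within `2δ` of `v`. Any packing of the remaining
points extends by `v` to a packing of `K`, so they have packing number at most `n - 1`; the same
holds for their closure, which is compact, because a finite packing of a closure can be moved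
slightly into the set itself.
-/

open Topology

section CoveringPacking

variable {X : Type*} [MetricSpace X] {δ : ℝ} {S T A P : Set X}

lemma covNum_le_encard (h : S ⊆ ⋃ x ∈ T, closedBall x δ) : covNum δ S ≤ T.encard :=
  sInf_le ⟨T, rfl, h⟩

lemma exists_encard_eq_covNum (hδ : 0 ≤ δ) (S : Set X) :
    ∃ T : Set X, T.encard = covNum δ S ∧ S ⊆ ⋃ x ∈ T, closedBall x δ := by
  have hcover : {n : ℕ∞ | ∃ T : Set X, T.encard = n ∧ S ⊆ ⋃ x ∈ T, closedBall x δ}.Nonempty :=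
    ⟨S.encard, S, rfl, fun x hx => mem_biUnion hx (mem_closedBall_self hδ)⟩
  exact csInf_mem hcover

@[simp]
lemma covNum_empty : covNum δ (∅ : Set X) = 0 :=
  nonpos_iff_eq_zero.mp <| by
    simpa using covNum_le_encard (S := ∅) (T := ∅) (δ := δ) (empty_subset _)

lemma covNum_ne_zero (hδ : 0 ≤ δ) (hS : S.Nonempty) : covNum δ S ≠ 0 := by
  intro h
  obtain ⟨T, hT, hST⟩ := exists_encard_eq_covNum hδ S
  rw [h, encard_eq_zero] at hT
  simpa [hT] using hST hS.some_mem

lemma covNum_mono {B : Set X} (h : A ⊆ B) : covNum δ A ≤ covNum δ B :=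
  sInf_le_sInf <| by
    rintro _ ⟨T, hT, hBT⟩
    exact ⟨T, hT, h.trans hBT⟩

lemma covNum_union_le (hδ : 0 ≤ δ) (A B : Set X) :
    covNum δ (A ∪ B) ≤ covNum δ A + covNum δ B := by
  obtain ⟨TA, hTA, hA⟩ := exists_encard_eq_covNum hδ A
  obtain ⟨TB, hTB, hB⟩ := exists_encard_eq_covNum hδ B
  calc covNum δ (A ∪ B) ≤ (TA ∪ TB).encard :=
        covNum_le_encard <| union_subset
          (hA.trans (biUnion_subset_biUnion_left subset_union_left))
          (hB.trans (biUnion_subset_biUnion_left subset_union_right))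
    _ ≤ TA.encard + TB.encard := encard_union_le TA TB
    _ = covNum δ A + covNum δ B := by rw [hTA, hTB]

lemma encard_le_packNum (hPS : P ⊆ S) (hP : P.Pairwise fun p q => 2 * δ < dist p q) :
    P.encard ≤ packNum δ S :=
  le_sSup ⟨P, hPS, rfl, hP⟩

lemma one_le_packNum (hS : S.Nonempty) : 1 ≤ packNum δ S := by
  simpa using encard_le_packNum (δ := δ) (singleton_subset_iff.mpr hS.some_mem)
    (pairwise_singleton _ _)

lemma exists_packing_of_subset_closure (hδ : 0 ≤ δ) (hPA : P ⊆ closure A) (hP : P.Finite)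
    (hpack : P.Pairwise fun p q => 2 * δ < dist p q) :
    ∃ Q ⊆ A, Q.encard = P.encard ∧ Q.Pairwise fun p q => 2 * δ < dist p q := by
  -- a finite packing has some slack `η`, so moving each point by less than `η` keeps it a packing
  obtain ⟨η, hη, hslack⟩ :
      ∃ η > 0, ∀ pq ∈ P ×ˢ P, pq.1 ≠ pq.2 → 2 * δ + 2 * η < dist pq.1 pq.2 := by
    have : ∀ᶠ η in 𝓝 (0 : ℝ), ∀ pq ∈ P ×ˢ P, pq.1 ≠ pq.2 → 2 * δ + 2 * η < dist pq.1 pq.2 := by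
      refine (Filter.eventually_all_finite (hP.prod hP)).mpr fun pq hpq => ?_
      by_cases h : pq.1 = pq.2
      · exact Filter.Eventually.of_forall fun _ h' => absurd h h'
      have hcont : Continuous fun η : ℝ => 2 * δ + 2 * η := by fun_prop
      exact (hcont.continuousAt.eventually_lt continuousAt_const
        (by simpa using hpack hpq.1 hpq.2 h)).mono fun _ h _ => h
    obtain ⟨ε, hε, hball⟩ := Metric.eventually_nhds_iff.mp this
    refine ⟨ε / 2, by positivity, hball ?_⟩
    rw [Real.dist_0_eq_abs, abs_of_pos (by positivity)]
    linarith
  choose! f hfA hf using fun p (hp : p ∈ P) => Metric.mem_closure_iff.mp (hPA hp) η hη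
  have hfar : ∀ p ∈ P, ∀ q ∈ P, p ≠ q → 2 * δ < dist (f p) (f q) := by
    intro p hp q hq hpq
    have := hslack (p, q) ⟨hp, hq⟩ hpq
    linarith [dist_triangle4 p (f p) (f q) q, hf p hp, hf q hq, dist_comm q (f q)]
  have hinj : InjOn f P := fun p hp q hq hfpq => by
    by_contra hpq
    have := hfar p hp q hq hpq
    rw [hfpq, dist_self] at this
    linarith
  refine ⟨f '' P, image_subset_iff.mpr hfA, hinj.encard_image, ?_⟩
  rintro _ ⟨p, hp, rfl⟩ _ ⟨q, hq, rfl⟩ hpq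
  exact hfar p hp q hq (ne_of_apply_ne f hpq)

lemma packNum_closure_le (hδ : 0 ≤ δ) : packNum δ (closure A) ≤ packNum δ A := by
  refine sSup_le ?_
  rintro _ ⟨P, hPA, rfl, hP⟩
  refine ENat.forall_natCast_le_iff_le.mp fun k hk => ?_
  obtain ⟨P', hP'P, hP'k⟩ := exists_subset_encard_eq hk
  obtain ⟨Q, hQA, hQ, hQpack⟩ := exists_packing_of_subset_closure hδ (hP'P.trans hPA)
    (finite_of_encard_eq_coe hP'k) (hP.mono hP'P)
  exact hP'k ▸ hQ ▸ encard_le_packNum hQA hQpack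

lemma packNum_far_add_one_le (hδ : 0 ≤ δ) {v : X} (hv : v ∈ S) :
    packNum δ {x ∈ S | 2 * δ < dist x v} + 1 ≤ packNum δ S := by
  rw [packNum, ENat.sSup_add]
  · refine iSup₂_le ?_
    rintro _ ⟨P, hPS, rfl, hP⟩
    have hvP : v ∉ P := fun h => by linarith [dist_self v ▸ (hPS h).2]
    rw [← encard_insert_of_notMem hvP]
    refine encard_le_packNum (insert_subset hv fun x hx => (hPS hx).1) ?_
    exact hP.insert fun q hq _ => ⟨by rw [dist_comm]; exact (hPS hq).2, (hPS hq).2⟩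
  · exact ⟨0, ∅, empty_subset _, encard_empty, pairwise_empty _⟩

lemma covNum_le_mul_of_packNum_le {c : ℕ} (hwd : WeakDoubling X c) (hδ : 0 < δ) (n : ℕ)
    (K : Set X) (hK : IsCompact K) (hpack : packNum δ K ≤ n) : covNum δ K ≤ c * n := by
  induction n generalizing K with
  | zero =>
    rcases K.eq_empty_or_nonempty with rfl | hne
    · simp
    · exact absurd ((one_le_packNum hne).trans hpack) (by simp)
  | succ n ih =>
    rcases K.eq_empty_or_nonempty with rfl | hne
    · simp
    obtain ⟨v, hv, hcov⟩ := hwd δ hδ K hK hne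
    -- the far part `{x ∈ K | 2 * δ < dist x v}` need not be compact, so recurse on its closure
    set L := closure {x ∈ K | 2 * δ < dist x v}
    have hLK : L ⊆ K := closure_minimal (sep_subset _ _) hK.isClosed
    have hpackL : packNum δ L ≤ n := by
      have := (add_le_add (packNum_closure_le hδ.le) le_rfl).trans
        ((packNum_far_add_one_le hδ.le hv).trans hpack)
      exact (ENat.add_le_add_iff_right ENat.one_ne_top).mp (by exact_mod_cast this)
    have hKL : K ⊆ (closedBall v (2 * δ) ∩ K) ∪ L := fun x hx => by
      rcases le_or_gt (dist x v) (2 * δ) with h | h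
      · exact Or.inl ⟨h, hx⟩
      · exact Or.inr (subset_closure ⟨hx, h⟩)
    calc covNum δ K ≤ covNum δ (closedBall v (2 * δ) ∩ K) + covNum δ L :=
          (covNum_mono hKL).trans (covNum_union_le hδ.le _ _)
      _ ≤ c + c * n :=
          add_le_add hcov (ih L (hK.of_isClosed_subset isClosed_closure hLK) hpackL)
      _ = c * (n + 1) := by ring

end CoveringPacking

theorem covNum_le_mul_packNum_of_weakDoubling_general {X : Type*} [MetricSpace X]
    (c : ℕ) (hwd : WeakDoubling X c)
    (S : Set X) (hS : IsCompact S) (δ : ℝ) (hδ : 0 < δ) :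
    covNum δ S ≤ (c : ℕ∞) * packNum δ S := by
  rcases S.eq_empty_or_nonempty with rfl | hne
  · simp
  obtain ⟨v, hv, hcov⟩ := hwd δ hδ S hS hne
  -- rules out `0 * ⊤ = 0` when the packing number is infinite
  have hc : (c : ℕ∞) ≠ 0 := fun hc => by
    have hvS : v ∈ closedBall v (2 * δ) ∩ S := ⟨mem_closedBall_self (by positivity), hv⟩
    exact covNum_ne_zero hδ.le ⟨v, hvS⟩ (nonpos_iff_eq_zero.mp (hc ▸ hcov))
  cases h : packNum δ S with
  | top => simp [ENat.mul_top hc]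
  | coe n => exact covNum_le_mul_of_packNum_le hwd hδ n S hS h.le

/-- weak doubling implies the covering–packing inequality. -/
theorem covNum_le_mul_packNum_of_weakDoubling {X : Type*} [MetricSpace X]
    [CompleteSpace X] (c : ℕ) (hwd : WeakDoubling X c)
    (S : Set X) (hS : IsCompact S) (δ : ℝ) (hδ : 0 < δ) :
    covNum δ S ≤ (c : ℕ∞) * packNum δ S :=
  covNum_le_mul_packNum_of_weakDoubling_general c hwd S hS δ hδ
end

section
/- Let (X,d) be a metric space and c a constant such that for every δ > 0, every subset of X of diameter at most 2δ can be covered by at most c closed balls of radius δ of X. Let δ > 0, let S ⊆ X be compact, and suppose the graph on vertex set S in which two distinct points x,y are adjacent if and only if d(x,y) > 2δ admits a proper coloring with at most c'·ν_δ(S) colors, where ν_δ(S) equals the clique number of this graph. Then ρ_δ(S) ≤ c·c'·ν_δ(S). -/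
open Metric Set

lemma enc_iUnion_le' {X : Type*} (c : ℕ∞) : ∀ (n : ℕ) (A : Fin n → Set X),
    (∀ i, (A i).encard ≤ c) → (⋃ i, A i).encard ≤ n * c := by
  intro n
  induction n with
  | zero => simp
  | succ m ih =>
    intro A hA
    have : (⋃ i, A i) = A 0 ∪ ⋃ i : Fin m, A i.succ := by
      ext x; simp [Fin.exists_fin_succ]
    rw [this]
    calc (A 0 ∪ ⋃ i : Fin m, A i.succ).encard
        ≤ (A 0).encard + (⋃ i : Fin m, A i.succ).encard := Set.encard_union_le _ _
      _ ≤ c + m * c := add_le_add (hA 0) (ih _ fun i => hA i.succ)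
      _ = (m + 1 : ℕ) * c := by push_cast; ring

lemma covNum_exists' {X : Type*} [MetricSpace X] {δ : ℝ} {A : Set X} {c : ℕ}
    (h : covNum δ A ≤ (c : ℕ∞)) :
    ∃ T : Set X, T.encard ≤ (c : ℕ∞) ∧ A ⊆ ⋃ x ∈ T, Metric.closedBall x δ := by
  by_contra h'
  push_neg at h'
  have h1 : ((c : ℕ∞) + 1) ≤ covNum δ A := by
    apply le_sInf
    rintro m ⟨T, rfl, hcov⟩
    by_contra hm
    push_neg at hm
    exact h' T (Order.le_of_lt_add_one hm) hcov
  have : ((c : ℕ∞) + 1) ≤ (c : ℕ∞) := h1.trans h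
  exact absurd this (by simp [ENat.add_one_le_iff])

/-- simplex-ball covering property plus linear chromatic bound for the
complement graph yields the covering–packing inequality. -/
theorem covNum_le_of_simplex_cover_and_coloring {X : Type*} [MetricSpace X]
    (c c' : ℕ)
    (hc : ∀ δ : ℝ, 0 < δ → ∀ A : Set X, (∀ x ∈ A, ∀ y ∈ A, dist x y ≤ 2 * δ) →
      covNum δ A ≤ (c : ℕ∞))
    (δ : ℝ) (hδ : 0 < δ) (S : Set X) (hS : IsCompact S)
    (hcol : ∃ (n : ℕ) (f : X → Fin n), (n : ℕ∞) ≤ (c' : ℕ∞) * packNum δ S ∧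
      ∀ x ∈ S, ∀ y ∈ S, x ≠ y → 2 * δ < dist x y → f x ≠ f y) :
    covNum δ S ≤ (c : ℕ∞) * (c' : ℕ∞) * packNum δ S := by
  obtain ⟨n, f, hn, hf⟩ := hcol
  set A : Fin n → Set X := fun i => S ∩ f ⁻¹' {i} with hA
  have hdiam : ∀ i, ∀ x ∈ A i, ∀ y ∈ A i, dist x y ≤ 2 * δ := by
    rintro i x ⟨hxS, hxi⟩ y ⟨hyS, hyi⟩
    by_contra hlt
    push_neg at hlt
    have hxy : x ≠ y := by rintro rfl; simp at hlt; linarith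
    exact hf x hxS y hyS hxy hlt (by simp_all)
  choose T hT hTcov using fun i => covNum_exists' (hc δ hδ (A i) (hdiam i))
  have hScov : S ⊆ ⋃ x ∈ (⋃ i, T i), Metric.closedBall x δ := by
    intro x hx
    have hxA : x ∈ A (f x) := ⟨hx, rfl⟩
    have := hTcov (f x) hxA
    simp only [Set.mem_iUnion] at this ⊢
    obtain ⟨t, ht, hxt⟩ := this
    exact ⟨t, ⟨f x, ht⟩, hxt⟩
  have hcard : (⋃ i, T i).encard ≤ (n : ℕ∞) * c := enc_iUnion_le' _ n T hT
  have h1 : covNum δ S ≤ (n : ℕ∞) * c :=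
    le_trans (sInf_le ⟨⋃ i, T i, rfl, hScov⟩) hcard
  calc covNum δ S ≤ (n : ℕ∞) * c := h1
    _ ≤ ((c' : ℕ∞) * packNum δ S) * c := mul_le_mul_left hn _
    _ = (c : ℕ∞) * (c' : ℕ∞) * packNum δ S := by ring
end

section
/- Let (𝒮,d) be a Busemann surface, let x,y,z ∈ 𝒮, and let x',y',z' ∈ Δ(x,y,z), where Δ(x,y,z) denotes the convex hull of {x,y,z}. Then π(x',y',z') ≤ π(x,y,z), where π(a,b,c) = d(a,b)+d(b,c)+d(c,a) is the perimeter. Moreover, equality holds only if {x',y',z'} = {x,y,z} or the points x,y,z are collinear (one of them lies on the geodesic segment between the other two). -/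
open Metric Set

/-! For fixed `q, r`, the function `w ↦ d(w,q) + d(w,r)` is convex along geodesics of a Busemann
space, so its sublevel sets are convex and its maximum on `Δ(x,y,z)` is attained at a vertex.
Replacing `x'`, `y'`, `z'` in turn by such a vertex does not decrease the perimeter, and a triangle
with vertices among `x, y, z` has perimeter at most `π(x,y,z)`.

In the equality case, if the maximum `M` is also attained off the vertices, then the open sublevel
set together with the vertices is not convex, so the function is constantly `M` along a
nondegenerate geodesic `σ`. Both distance functions are then affine along `σ`, and in a Busemann
space an affine distance function along a geodesic has slope `±1`. Hence `σ` lies on the geodesic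
from `q` to `r`, `M = d(q,r)`, and the three vertices lie on the segment `[q,r]`.
-/

section ConvexReal

variable {f g : ℝ → ℝ} {a b L M : ℝ}

lemma ConvexOn.eq_of_le_of_mem_Ioo (hf : ConvexOn ℝ (Icc a b) f) (ha : f a ≤ M) (hb : f b ≤ M)
    {t : ℝ} (ht : t ∈ Ioo a b) (hft : M ≤ f t) {s : ℝ} (hs : s ∈ Icc a b) : f s = M := by
  have hab : a ≤ b := ht.1.le.trans ht.2.le
  refine le_antisymm ?_ ?_
  · calc f s ≤ max (f a) (f b) := hf.le_on_segment (left_mem_Icc.2 hab) (right_mem_Icc.2 hab)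
          (by rwa [segment_eq_Icc hab])
      _ ≤ M := max_le ha hb
  · rcases le_or_gt s t with hst | hts
    · exact hft.trans (hf.le_left_of_right_le'' hs (right_mem_Icc.2 hab) hst ht.2 (hb.trans hft))
    · exact hft.trans (hf.le_right_of_left_le'' (left_mem_Icc.2 hab) hs ht.1 hts.le (ha.trans hft))

lemma ConvexOn.mul_le_of_mem_Icc (hf : ConvexOn ℝ (Icc 0 L) f) {s : ℝ} (hs : s ∈ Icc 0 L) :
    L * f s ≤ (L - s) * f 0 + s * f L := by
  rcases (hs.1.trans hs.2).eq_or_lt with rfl | hL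
  · rw [le_antisymm hs.2 hs.1]
    simp
  have key := hf.2 (left_mem_Icc.2 hL.le) (right_mem_Icc.2 hL.le)
    (div_nonneg (sub_nonneg.2 hs.2) hL.le) (div_nonneg hs.1 hL.le)
    (by rw [← add_div, sub_add_cancel, div_self hL.ne'])
  simp only [smul_eq_mul, mul_zero, zero_add, div_mul_cancel₀ _ hL.ne'] at key
  rw [div_mul_eq_mul_div, div_mul_eq_mul_div, ← add_div, le_div_iff₀ hL] at key
  linarith

lemma ConvexOn.mul_eq_of_add_eq (hf : ConvexOn ℝ (Icc 0 L) f) (hg : ConvexOn ℝ (Icc 0 L) g)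
    (hfg : ∀ s ∈ Icc 0 L, f s + g s = M) {s : ℝ} (hs : s ∈ Icc 0 L) :
    L * f s = (L - s) * f 0 + s * f L := by
  have hL : 0 ≤ L := hs.1.trans hs.2
  have h₀ := hfg 0 (left_mem_Icc.2 hL)
  have h₁ := hfg L (right_mem_Icc.2 hL)
  have hs' := hfg s hs
  refine le_antisymm (hf.mul_le_of_mem_Icc hs) ?_
  linear_combination hg.mul_le_of_mem_Icc hs + (L - s) * h₀ + s * h₁ - L * hs'

end ConvexReal

section Busemann

variable {X : Type*} [MetricSpace X]

namespace IsGeodesicMap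

variable {γ : ℝ → X} {l : ℝ}

lemma of_le (h : ∀ s ∈ Icc 0 l, ∀ t ∈ Icc 0 l, s ≤ t → dist (γ s) (γ t) = t - s) :
    IsGeodesicMap γ l := by
  intro s hs t ht
  rcases le_total s t with hst | hst
  · rw [h s hs t ht hst, abs_sub_comm, abs_of_nonneg (sub_nonneg.2 hst)]
  · rw [dist_comm, h t ht s hs hst, abs_of_nonneg (sub_nonneg.2 hst)]

lemma dist_eq (hγ : IsGeodesicMap γ l) {s t : ℝ} (hs : s ∈ Icc 0 l) (ht : t ∈ Icc 0 l)
    (hst : s ≤ t) : dist (γ s) (γ t) = t - s := by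
  rw [hγ s hs t ht, abs_sub_comm, abs_of_nonneg (sub_nonneg.2 hst)]

lemma dist_endpoints (hγ : IsGeodesicMap γ l) (hl : 0 ≤ l) : dist (γ 0) (γ l) = l := by
  rw [hγ.dist_eq (left_mem_Icc.2 hl) (right_mem_Icc.2 hl) hl, sub_zero]

lemma mono (hγ : IsGeodesicMap γ l) {l' : ℝ} (hl : l' ≤ l) : IsGeodesicMap γ l' :=
  fun s hs t ht => hγ s ⟨hs.1, hs.2.trans hl⟩ t ⟨ht.1, ht.2.trans hl⟩

lemma comp_const_add (hγ : IsGeodesicMap γ l) {a l' : ℝ} (ha : 0 ≤ a) (hl : a + l' ≤ l) :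
    IsGeodesicMap (fun s => γ (a + s)) l' := by
  intro s hs t ht
  rw [hγ _ ⟨by linarith [hs.1], by linarith [hs.2]⟩ _ ⟨by linarith [ht.1], by linarith [ht.2]⟩,
    add_sub_add_left_eq_sub]

lemma comp_const_sub (hγ : IsGeodesicMap γ l) : IsGeodesicMap (fun s => γ (l - s)) l := by
  intro s hs t ht
  rw [hγ _ ⟨by linarith [hs.2], by linarith [hs.1]⟩ _ ⟨by linarith [ht.2], by linarith [ht.1]⟩,
    sub_sub_sub_cancel_left, abs_sub_comm]

lemma piecewise {γ' : ℝ → X} {l' : ℝ} (hγ : IsGeodesicMap γ l) (hγ' : IsGeodesicMap γ' l')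
    (hl : 0 ≤ l) (hl' : 0 ≤ l') (hmid : γ l = γ' 0) (hlen : dist (γ 0) (γ' l') = l + l') :
    IsGeodesicMap (fun s => if s ≤ l then γ s else γ' (s - l)) (l + l') := by
  refine of_le fun s hs t ht hst => ?_
  by_cases hsl : s ≤ l <;> by_cases htl : t ≤ l <;> simp only [hsl, htl, if_true, if_false]
  · exact hγ.dist_eq ⟨hs.1, hsl⟩ ⟨ht.1, htl⟩ hst
  · have h₁ := hγ.dist_eq ⟨hs.1, hsl⟩ ⟨hl, le_rfl⟩ hsl
    have h₂ := hγ'.dist_eq (s := 0) (t := t - l) ⟨le_rfl, hl'⟩ ⟨by linarith, by linarith [ht.2]⟩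
      (by linarith)
    have h₃ := hγ.dist_eq ⟨le_rfl, hl⟩ ⟨hs.1, hsl⟩ hs.1
    have h₄ := hγ'.dist_eq (s := t - l) ⟨by linarith, by linarith [ht.2]⟩ ⟨hl', le_rfl⟩
      (by linarith [ht.2])
    rw [hmid] at h₁
    have := dist_triangle (γ s) (γ' 0) (γ' (t - l))
    have := dist_triangle4 (γ 0) (γ s) (γ' (t - l)) (γ' l')
    linarith
  · exact absurd (hst.trans htl) hsl
  · rw [hγ'.dist_eq ⟨by linarith, by linarith [hs.2]⟩ ⟨by linarith, by linarith [ht.2]⟩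
      (by linarith)]
    ring

end IsGeodesicMap

lemma isGeodesicMap_const (c : X) : IsGeodesicMap (fun _ => c) 0 := by
  intro s hs t ht
  rw [le_antisymm hs.2 hs.1, le_antisymm ht.2 ht.1]
  simp

lemma IsGeodesicSpace.exists_isGeodesicMap_through (hX : IsGeodesicSpace X) {x y w : X}
    (hw : w ∈ seg x y) : ∃ η : ℝ → X, IsGeodesicMap η (dist x y) ∧ η 0 = x ∧
      η (dist x w) = w ∧ η (dist x y) = y := by
  obtain ⟨γ, hγ, hγ0, hγ1⟩ := hX x w
  obtain ⟨γ', hγ', hγ'0, hγ'1⟩ := hX w y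
  have hxy : dist x w + dist w y = dist x y := hw
  refine ⟨fun s => if s ≤ dist x w then γ s else γ' (s - dist x w), ?_, ?_, ?_, ?_⟩
  · rw [← hxy]
    exact hγ.piecewise hγ' dist_nonneg dist_nonneg (hγ1.trans hγ'0.symm)
      (by rw [hγ0, hγ'1, hxy])
  · simp [hγ0]
  · simp [hγ1]
  · dsimp only
    split_ifs with h
    · have hwy : dist w y = 0 := by linarith [dist_nonneg (x := w) (y := y)]
      rw [show dist x y = dist x w by linarith, hγ1, dist_eq_zero.1 hwy]
    · rw [← hxy, add_sub_cancel_left, hγ'1]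

lemma dist_mem_Icc_of_mem_seg {x y w : X} (hw : w ∈ seg x y) : dist x w ∈ Icc 0 (dist x y) :=
  ⟨dist_nonneg, by
    linarith [show dist x w + dist w y = dist x y from hw, dist_nonneg (x := w) (y := y)]⟩

namespace IsBusemannSpace

lemma eqOn_of_isGeodesicMap (hB : IsBusemannSpace X) {γ γ' : ℝ → X} {l : ℝ}
    (hγ : IsGeodesicMap γ l) (hγ' : IsGeodesicMap γ' l) (h0 : γ 0 = γ' 0) (h1 : γ l = γ' l) :
    EqOn γ γ' (Icc 0 l) := by
  intro s hs
  have hl : 0 ≤ l := hs.1.trans hs.2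
  rcases hl.eq_or_lt with rfl | hl
  · rwa [le_antisymm hs.2 hs.1]
  have key := hB.2 γ γ' l l hl.le hl.le hγ hγ' (s / l)
    ⟨div_nonneg hs.1 hl.le, div_le_one_of_le₀ hs.2 hl.le⟩
  rw [div_mul_cancel₀ s hl.ne', h0, h1] at key
  simp only [dist_self, mul_zero, add_zero] at key
  exact dist_le_zero.1 key

lemma apply_dist_eq_of_mem_seg (hB : IsBusemannSpace X) {x y w : X} (hw : w ∈ seg x y)
    {γ : ℝ → X} (hγ : IsGeodesicMap γ (dist x y)) (h0 : γ 0 = x) (h1 : γ (dist x y) = y) :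
    γ (dist x w) = w := by
  obtain ⟨η, hη, hη0, hηw, hη1⟩ := hB.1.exists_isGeodesicMap_through hw
  rw [hB.eqOn_of_isGeodesicMap hγ hη (h0.trans hη0.symm) (h1.trans hη1.symm)
    (dist_mem_Icc_of_mem_seg hw), hηw]

lemma eq_of_mem_seg_of_dist_eq (hB : IsBusemannSpace X) {x y w w' : X} (hw : w ∈ seg x y)
    (hw' : w' ∈ seg x y) (hd : dist x w = dist x w') : w = w' := by
  obtain ⟨γ, hγ, h0, h1⟩ := hB.1 x y
  rw [← hB.apply_dist_eq_of_mem_seg hw hγ h0 h1, hd, hB.apply_dist_eq_of_mem_seg hw' hγ h0 h1]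

lemma convexOn_dist_comp (hB : IsBusemannSpace X) {γ : ℝ → X} {l : ℝ} (hγ : IsGeodesicMap γ l)
    (c : X) : ConvexOn ℝ (Icc 0 l) (fun s => dist (γ s) c) := by
  refine LinearOrder.convexOn_of_lt (convex_Icc 0 l) fun s hs t ht hst a b _ hb hab => ?_
  have key := hB.2 _ _ (t - s) 0 (by linarith) le_rfl (hγ.comp_const_add hs.1 (by linarith [ht.2]))
    (isGeodesicMap_const c) b ⟨hb.le, by linarith⟩
  obtain rfl : a = 1 - b := by linarith
  simp only [add_zero, add_sub_cancel, smul_eq_mul] at key ⊢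
  rwa [show (1 - b) * s + b * t = s + b * (t - s) by ring]

lemma dist_mul_dist_le_of_mem_seg (hB : IsBusemannSpace X) {u v w : X} (hw : w ∈ seg u v)
    (c : X) : dist u v * dist w c ≤ dist w v * dist u c + dist u w * dist v c := by
  obtain ⟨γ, hγ, h0, h1⟩ := hB.1 u v
  have hw' : dist u w + dist w v = dist u v := hw
  have := (hB.convexOn_dist_comp hγ c).mul_le_of_mem_Icc (dist_mem_Icc_of_mem_seg hw)
  simp only [h0, h1, hB.apply_dist_eq_of_mem_seg hw hγ h0 h1] at this
  rwa [show dist u v - dist u w = dist w v by linarith] at this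

lemma mem_seg_of_mem_seg_of_mem_seg (hB : IsBusemannSpace X) {a b u v : X} (huv : u ≠ v)
    (hu : u ∈ seg a v) (hv : v ∈ seg u b) : u ∈ seg a b := by
  have hav : dist a u + dist u v = dist a v := hu
  have hub : dist u v + dist v b = dist u b := hv
  have key := hB.dist_mul_dist_le_of_mem_seg hu b
  rw [← hav] at key
  have h : dist u v * (dist a u + dist u b - dist a b) ≤ 0 := by
    rw [← hub] at key ⊢
    linear_combination key
  have := nonpos_of_mul_nonpos_right h (dist_pos.2 huv)
  exact le_antisymm (by linarith) (dist_triangle a u b)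

lemma collinearPts_of_subset_seg (hB : IsBusemannSpace X) {c₁ c₂ x y z : X}
    (h : ({x, y, z} : Set X) ⊆ seg c₁ c₂) : CollinearPts x y z := by
  obtain ⟨γ, hγ, h0, h1⟩ := hB.1 c₁ c₂
  have param : ∀ w ∈ ({x, y, z} : Set X), ∃ s ∈ Icc 0 (dist c₁ c₂), γ s = w := fun w hw =>
    ⟨dist c₁ w, dist_mem_Icc_of_mem_seg (h hw), hB.apply_dist_eq_of_mem_seg (h hw) hγ h0 h1⟩
  obtain ⟨r, hr, rfl⟩ := param x (by simp)
  obtain ⟨s, hs, rfl⟩ := param y (by simp)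
  obtain ⟨t, ht, rfl⟩ := param z (by simp)
  simp only [CollinearPts, seg, mem_ofPred_eq, hγ r hr s hs, hγ s hs t ht, hγ r hr t ht,
    hγ s hs r hr, hγ t ht s hs]
  rcases le_total r s with h₁ | h₁ <;> rcases le_total s t with h₂ | h₂ <;>
    rcases le_total r t with h₃ | h₃ <;>
    simp only [abs_of_nonneg, abs_of_nonpos, sub_nonneg, sub_nonpos, *] <;>
    first | (left; linarith) | (right; left; linarith) | (right; right; linarith)

variable {σ : ℝ → X} {L : ℝ} {p : X} {a β : ℝ}

/-- If `dist p ∘ σ` is affine, so is `dist w ∘ σ` on `[0, t L]` for the point `w` of `[σ 0, p]`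
at distance `t a` from `σ 0`: Busemann convexity bounds it from above, the triangle inequality
through `p` from below. -/
lemma exists_dist_eq_affine_of_affine (hB : IsBusemannSpace X) (hσ : IsGeodesicMap σ L) (hL : 0 ≤ L)
    (haff : ∀ s ∈ Icc 0 L, dist p (σ s) = a + β * s) {t : ℝ} (ht : t ∈ Ioc 0 1) :
    ∃ w, dist p w = (1 - t) * a ∧ ∀ u ∈ Icc 0 (t * L), dist w (σ u) = t * a + β * u := by
  have hpa : dist (σ 0) p = a := by simpa [dist_comm] using haff 0 (left_mem_Icc.2 hL)
  have ha : 0 ≤ a := hpa ▸ dist_nonneg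
  obtain ⟨δ, hδ, hδ0, hδ1⟩ := hB.1 (σ 0) p
  rw [hpa] at hδ hδ1
  have hta : t * a ∈ Icc 0 a := ⟨by nlinarith [ht.1], by nlinarith [ht.2]⟩
  have hpw : dist p (δ (t * a)) = (1 - t) * a := by
    rw [← hδ1, dist_comm, hδ.dist_eq hta (right_mem_Icc.2 ha) hta.2]
    ring
  refine ⟨δ (t * a), hpw, fun u hu => le_antisymm ?_ ?_⟩
  · obtain ⟨s, hs, rfl⟩ : ∃ s ∈ Icc 0 L, t * s = u :=
      ⟨u / t, ⟨div_nonneg hu.1 ht.1.le, (div_le_iff₀' ht.1).2 hu.2⟩, mul_div_cancel₀ u ht.1.ne'⟩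
    have key := hB.2 δ σ a s ha hs.1 hδ (hσ.mono hs.2) t ⟨ht.1.le, ht.2⟩
    rw [hδ0, dist_self, hδ1, haff s hs] at key
    linarith
  · have := dist_triangle p (δ (t * a)) (σ u)
    have := haff u ⟨hu.1, hu.2.trans (mul_le_of_le_one_left hL ht.2)⟩
    linarith

/-- For `t = a / (2a + βL)`, the points given by `exists_dist_eq_affine_of_affine` from the two
ends of `σ` coincide, so the new affine formula holds on all of `[0, L]`. -/
lemma exists_dist_eq_affine_half (hB : IsBusemannSpace X) (hσ : IsGeodesicMap σ L)
    (hL : 0 ≤ L) (haff : ∀ s ∈ Icc 0 L, dist p (σ s) = a + β * s) (hβ : 0 ≤ β) :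
    ∃ w a', 2 * a' ≤ a ∧ ∀ s ∈ Icc 0 L, dist w (σ s) = a' + β * s := by
  have ha : 0 ≤ a := by simpa using (haff 0 (left_mem_Icc.2 hL)).symm.trans_ge dist_nonneg
  rcases ha.eq_or_lt with rfl | ha
  · exact ⟨p, 0, by norm_num, haff⟩
  set b := a + β * L with hb
  have hβL : 0 ≤ β * L := mul_nonneg hβ hL
  set t := a / (a + b) with ht
  have htab : t * (a + b) = a := div_mul_cancel₀ a (by linarith)
  have ht0 : 0 < t := div_pos ha (by linarith)
  have ht1 : 2 * t ≤ 1 := by nlinarith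
  clear_value b t
  obtain ⟨w₁, hpw₁, hw₁⟩ := hB.exists_dist_eq_affine_of_affine hσ hL haff ⟨ht0, by linarith⟩
  obtain ⟨w₂, hpw₂, hw₂⟩ := hB.exists_dist_eq_affine_of_affine (a := b) (β := -β) (t := 1 - t)
    hσ.comp_const_sub hL
    (fun s hs => by rw [haff _ ⟨by linarith [hs.2], by linarith [hs.1]⟩]; linear_combination -hb)
    ⟨by linarith, by linarith⟩
  have hm : t * L ∈ Icc 0 L := ⟨by positivity, by nlinarith⟩
  have hw₁m := hw₁ (t * L) (right_mem_Icc.2 (by positivity))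
  have hw₂m := hw₂ ((1 - t) * L) (right_mem_Icc.2 (by nlinarith))
  rw [show L - (1 - t) * L = t * L by ring] at hw₂m
  have hpm := haff (t * L) hm
  have hw : w₁ = w₂ := hB.eq_of_mem_seg_of_dist_eq (x := p) (y := σ (t * L))
    (by show _ + _ = _; rw [hpw₁, hw₁m, hpm]; ring)
    (by show _ + _ = _; rw [hpw₂, hw₂m, hpm]; linear_combination hb)
    (by rw [hpw₁, hpw₂]; linear_combination -htab)
  refine ⟨w₁, t * a, by nlinarith, fun s hs => ?_⟩
  rcases le_total s (t * L) with hs' | hs'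
  · exact hw₁ s ⟨hs.1, hs'⟩
  · have := hw₂ (L - s) ⟨by linarith [hs.2], by linarith⟩
    rw [sub_sub_cancel, ← hw] at this
    rw [this]
    linear_combination hb - htab

lemma slope_eq_one_of_nonneg (hB : IsBusemannSpace X) (hσ : IsGeodesicMap σ L) (hL : 0 < L)
    (haff : ∀ s ∈ Icc 0 L, dist p (σ s) = a + β * s) (hβ : 0 ≤ β) : β = 1 := by
  have hσL := hσ.dist_endpoints hL.le
  have hbound : ∀ (q : X) (a' : ℝ), (∀ s ∈ Icc 0 L, dist q (σ s) = a' + β * s) →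
      (1 - β) * L ≤ 2 * a' := fun q a' h => by
    have := dist_triangle (σ 0) q (σ L)
    rw [dist_comm (σ 0) q, h 0 (left_mem_Icc.2 hL.le), h L (right_mem_Icc.2 hL.le), hσL] at this
    linarith
  -- halving the constant term indefinitely forces `(1 - β) L ≤ 0`
  have hiter : ∀ n : ℕ, ∀ (q : X) (a' : ℝ), (∀ s ∈ Icc 0 L, dist q (σ s) = a' + β * s) →
      (1 - β) * L * 2 ^ n ≤ 2 * a' := by
    intro n
    induction n with
    | zero => simpa using hbound
    | succ n ih =>
      intro q a' h
      obtain ⟨w, a'', ha'', hw⟩ := hB.exists_dist_eq_affine_half hσ hL.le h hβ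
      rw [pow_succ]
      linarith [ih w a'' hw]
  refine le_antisymm ?_ ?_
  · have := dist_triangle p (σ 0) (σ L)
    rw [haff 0 (left_mem_Icc.2 hL.le), haff L (right_mem_Icc.2 hL.le), hσL] at this
    nlinarith
  · by_contra! hβ1
    obtain ⟨n, hn⟩ := pow_unbounded_of_one_lt (2 * a / ((1 - β) * L)) one_lt_two
    have hpos : 0 < (1 - β) * L := mul_pos (by linarith) hL
    rw [div_lt_iff₀ hpos] at hn
    linarith [hiter n p a haff]

lemma slope_eq_one_or_neg_one (hB : IsBusemannSpace X) (hσ : IsGeodesicMap σ L) (hL : 0 < L)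
    (haff : ∀ s ∈ Icc 0 L, dist p (σ s) = a + β * s) : β = 1 ∨ β = -1 := by
  rcases le_total 0 β with hβ | hβ
  · exact Or.inl (hB.slope_eq_one_of_nonneg hσ hL haff hβ)
  · refine Or.inr (neg_eq_iff_eq_neg.1 (hB.slope_eq_one_of_nonneg hσ.comp_const_sub hL
      (p := p) (a := a + β * L) (fun s hs => ?_) (neg_nonneg.2 hβ)))
    rw [haff _ ⟨by linarith [hs.2], by linarith [hs.1]⟩]
    ring

lemma mem_seg_of_mem_seg_of_add_eq (hB : IsBusemannSpace X) {c₁ c₂ u v : X} (huv : u ≠ v)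
    (hu : u ∈ seg c₁ v) (h : dist u c₁ + dist u c₂ = dist v c₁ + dist v c₂) :
    u ∈ seg c₁ c₂ := by
  have hu' : dist c₁ u + dist u v = dist c₁ v := hu
  refine hB.mem_seg_of_mem_seg_of_mem_seg huv hu ?_
  show _ + _ = _
  rw [dist_comm u c₁, dist_comm v c₁] at h
  linarith

/-- Both distances are affine along `σ`, hence of slope `±1`: `σ` runs straight away from one of
`c₁, c₂` and towards the other, which puts `σ 0` on `[c₁, c₂]`. -/
lemma dist_eq_of_isGeodesicMap_of_add_eq (hB : IsBusemannSpace X) (hσ : IsGeodesicMap σ L)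
    (hL : 0 < L) {c₁ c₂ : X} {M : ℝ}
    (h : ∀ s ∈ Icc 0 L, dist (σ s) c₁ + dist (σ s) c₂ = M) : dist c₁ c₂ = M := by
  have h₀ := h 0 (left_mem_Icc.2 hL.le)
  have h₁ := h L (right_mem_Icc.2 hL.le)
  have hσL := hσ.dist_endpoints hL.le
  have hne : σ 0 ≠ σ L := dist_pos.1 (by rw [hσL]; exact hL)
  have haff : ∀ s ∈ Icc 0 L,
      dist c₁ (σ s) = dist (σ 0) c₁ + (dist (σ L) c₁ - dist (σ 0) c₁) / L * s := by
    intro s hs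
    have := (hB.convexOn_dist_comp hσ c₁).mul_eq_of_add_eq (hB.convexOn_dist_comp hσ c₂) h hs
    rw [dist_comm]
    field_simp
    linarith
  have hL₁ := haff L (right_mem_Icc.2 hL.le)
  have := dist_comm c₁ (σ 0)
  have := dist_comm c₂ (σ 0)
  have := dist_comm c₂ (σ L)
  rcases hB.slope_eq_one_or_neg_one hσ hL haff with hβ | hβ
  · rw [hβ] at hL₁
    have hu : σ 0 ∈ seg c₁ (σ L) := by
      show _ + _ = _
      linarith
    have : dist c₁ (σ 0) + dist (σ 0) c₂ = dist c₁ c₂ :=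
      hB.mem_seg_of_mem_seg_of_add_eq hne hu (h₀.trans h₁.symm)
    linarith
  · rw [hβ] at hL₁
    have hu : σ 0 ∈ seg c₂ (σ L) := by
      show _ + _ = _
      linarith [dist_comm c₁ (σ L)]
    have : dist c₂ (σ 0) + dist (σ 0) c₁ = dist c₂ c₁ :=
      hB.mem_seg_of_mem_seg_of_add_eq (c₂ := c₁) hne hu (by linarith)
    linarith [dist_comm c₁ c₂]

end IsBusemannSpace

lemma gHull_subset {Q C : Set X} (hC : GConvex C) (hQC : Q ⊆ C) : gHull Q ⊆ C :=
  sInter_subset_of_mem ⟨hC, hQC⟩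

def ConvexAlongGeodesics (φ : X → ℝ) : Prop :=
  ∀ (γ : ℝ → X) (l : ℝ), IsGeodesicMap γ l → ConvexOn ℝ (Icc 0 l) (φ ∘ γ)

lemma IsBusemannSpace.convexAlongGeodesics_dist_add (hB : IsBusemannSpace X) (c₁ c₂ : X) :
    ConvexAlongGeodesics fun w => dist w c₁ + dist w c₂ :=
  fun _ _ hγ => (hB.convexOn_dist_comp hγ c₁).add (hB.convexOn_dist_comp hγ c₂)

namespace ConvexAlongGeodesics

variable {φ : X → ℝ} {M : ℝ}

lemma gConvex_sublevel (hφ : ConvexAlongGeodesics φ) (hB : IsBusemannSpace X) (M : ℝ) :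
    GConvex {w | φ w ≤ M} := by
  intro u hu v hv w hw
  obtain ⟨γ, hγ, h0, h1⟩ := hB.1 u v
  have hl := dist_nonneg (x := u) (y := v)
  have := (hφ γ _ hγ).le_on_segment (left_mem_Icc.2 hl) (right_mem_Icc.2 hl)
    (by rw [segment_eq_Icc hl]; exact dist_mem_Icc_of_mem_seg hw)
  simp only [Function.comp, h0, h1, hB.apply_dist_eq_of_mem_seg hw hγ h0 h1] at this
  exact this.trans (max_le hu hv)

lemma gConvex_union (hφ : ConvexAlongGeodesics φ) (hB : IsBusemannSpace X) {Q : Set X}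
    (hQ : ∀ q ∈ Q, φ q ≤ M)
    (hlevel : ∀ (γ : ℝ → X) (l : ℝ), 0 < l → IsGeodesicMap γ l → ∃ s ∈ Icc 0 l, φ (γ s) ≠ M) :
    GConvex ({w | φ w < M} ∪ Q) := by
  have hle : ∀ w ∈ {w | φ w < M} ∪ Q, φ w ≤ M := fun w hw => hw.elim (fun h => le_of_lt h) (hQ w)
  intro u hu v hv w hw
  by_contra hwG
  have hwu : w ≠ u := fun h => hwG (h ▸ hu)
  have hwv : w ≠ v := fun h => hwG (h ▸ hv)
  have hMw : M ≤ φ w := not_lt.1 fun h => hwG (Or.inl h)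
  obtain ⟨γ, hγ, h0, h1⟩ := hB.1 u v
  have hwseg : dist u w + dist w v = dist u v := hw
  have ht : dist u w ∈ Ioo 0 (dist u v) :=
    ⟨dist_pos.2 hwu.symm, by linarith [dist_pos.2 hwv]⟩
  obtain ⟨s, hs, hne⟩ := hlevel γ _ (ht.1.trans ht.2) hγ
  refine hne ((hφ γ _ hγ).eq_of_le_of_mem_Ioo ?_ ?_ ht ?_ hs)
  · simpa [h0] using hle u hu
  · simpa [h1] using hle v hv
  · simpa [hB.apply_dist_eq_of_mem_seg hw hγ h0 h1] using hMw

lemma mem_or_exists_of_mem_gHull (hφ : ConvexAlongGeodesics φ) (hB : IsBusemannSpace X)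
    {Q : Set X} (hQ : ∀ q ∈ Q, φ q ≤ M) {p : X} (hp : p ∈ gHull Q) (hpM : φ p = M) :
    p ∈ Q ∨ ∃ (γ : ℝ → X) (l : ℝ), 0 < l ∧ IsGeodesicMap γ l ∧ ∀ s ∈ Icc 0 l, φ (γ s) = M := by
  by_contra! h
  obtain ⟨hpQ, hlevel⟩ := h
  rcases gHull_subset (hφ.gConvex_union hB hQ hlevel) (subset_union_right) hp with hp | hp
  · exact (ne_of_lt hp) hpM
  · exact hpQ hp

end ConvexAlongGeodesics

lemma IsBusemannSpace.mem_or_subset_seg_of_mem_gHull (hB : IsBusemannSpace X) {c₁ c₂ : X}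
    {M : ℝ} {Q : Set X} (hQ : ∀ q ∈ Q, dist q c₁ + dist q c₂ ≤ M) {p : X} (hp : p ∈ gHull Q)
    (hpM : dist p c₁ + dist p c₂ = M) : p ∈ Q ∨ Q ⊆ seg c₁ c₂ := by
  refine ((hB.convexAlongGeodesics_dist_add c₁ c₂).mem_or_exists_of_mem_gHull hB hQ hp
    hpM).imp_right ?_
  rintro ⟨σ, L, hL, hσ, hlevel⟩ q hq
  have := hB.dist_eq_of_isGeodesicMap_of_add_eq hσ hL hlevel
  exact le_antisymm (by linarith [hQ q hq, dist_comm c₁ q]) (dist_triangle c₁ q c₂)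

section Perimeter

variable {x y z a b c : X}

lemma perim_rotate (a b c : X) : perim a b c = perim b c a := by
  unfold perim
  ring

lemma perim_le_of_mem (ha : a ∈ ({x, y, z} : Set X)) (hb : b ∈ ({x, y, z} : Set X))
    (hc : c ∈ ({x, y, z} : Set X)) : perim a b c ≤ perim x y z := by
  have := dist_triangle x y z
  have := dist_triangle y z x
  have := dist_triangle z x y
  rcases ha with rfl | rfl | rfl <;> rcases hb with rfl | rfl | rfl <;>
    rcases hc with rfl | rfl | rfl <;> simp only [perim, dist_self, dist_comm] at * <;> linarith

lemma two_mul_dist_lt_perim (hcol : ¬ CollinearPts x y z) (ha : a ∈ ({x, y, z} : Set X))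
    (hb : b ∈ ({x, y, z} : Set X)) : 2 * dist a b < perim x y z := by
  simp only [CollinearPts, seg, mem_ofPred_eq, not_or] at hcol
  have := lt_of_le_of_ne (dist_triangle x y z) (Ne.symm hcol.1)
  have := lt_of_le_of_ne (dist_triangle y x z) (Ne.symm hcol.2.1)
  have := lt_of_le_of_ne (dist_triangle x z y) (Ne.symm hcol.2.2)
  have := dist_nonneg (x := x) (y := z)
  rcases ha with rfl | rfl | rfl <;> rcases hb with rfl | rfl | rfl <;>
    simp only [perim, dist_self, dist_comm] at * <;> linarith

lemma insert_eq_of_perim_eq (hcol : ¬ CollinearPts x y z) (ha : a ∈ ({x, y, z} : Set X))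
    (hb : b ∈ ({x, y, z} : Set X)) (hc : c ∈ ({x, y, z} : Set X))
    (h : perim a b c = perim x y z) : ({a, b, c} : Set X) = {x, y, z} := by
  have hab : a ≠ b := by
    rintro rfl
    have := two_mul_dist_lt_perim hcol ha hc
    simp only [perim, dist_self, dist_comm c] at h this
    linarith
  have hbc : b ≠ c := by
    rintro rfl
    have := two_mul_dist_lt_perim hcol ha hb
    simp only [perim, dist_self, dist_comm b] at h this
    linarith
  have hac : a ≠ c := by
    rintro rfl
    have := two_mul_dist_lt_perim hcol ha hb
    simp only [perim, dist_self, dist_comm b] at h this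
    linarith
  refine eq_of_subset_of_ncard_le (insert_subset_iff.2 ⟨ha, insert_subset_iff.2 ⟨hb,
    singleton_subset_iff.2 hc⟩⟩) ?_ (toFinite _)
  rw [ncard_eq_three.2 ⟨a, b, c, hab, hac, hbc, rfl⟩]
  have := ncard_insert_le x {y, z}
  have := ncard_insert_le y {z}
  rw [ncard_singleton] at *
  omega

lemma IsBusemannSpace.exists_vertex_perim_ge (hB : IsBusemannSpace X) {p : X}
    (hp : p ∈ triangleG x y z) (q r : X) :
    ∃ v ∈ ({x, y, z} : Set X), perim p q r ≤ perim v q r ∧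
      (perim p q r = perim v q r → p ∈ ({x, y, z} : Set X) ∨ CollinearPts x y z) := by
  obtain ⟨v, hv, hmax⟩ := exists_max_image {x, y, z} (fun w => dist w q + dist w r)
    (toFinite _) ⟨x, by simp⟩
  have hpv : dist p q + dist p r ≤ dist v q + dist v r :=
    gHull_subset ((hB.convexAlongGeodesics_dist_add q r).gConvex_sublevel hB _) hmax hp
  have := dist_comm r p
  have := dist_comm r v
  refine ⟨v, hv, by unfold perim; linarith, fun h => ?_⟩
  unfold perim at h
  exact (hB.mem_or_subset_seg_of_mem_gHull hmax hp (by linarith)).imp_right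
    hB.collinearPts_of_subset_seg

end Perimeter

end Busemann

/-- monotonicity of perimeters of triangles, with the equality case. -/
theorem perim_mono_of_mem_triangle {X : Type*} [MetricSpace X]
    (hX : IsBusemannSurface X) (x y z x' y' z' : X)
    (hx' : x' ∈ triangleG x y z) (hy' : y' ∈ triangleG x y z)
    (hz' : z' ∈ triangleG x y z) :
    perim x' y' z' ≤ perim x y z ∧
      (perim x' y' z' = perim x y z →
        ({x', y', z'} : Set X) = ({x, y, z} : Set X) ∨ CollinearPts x y z) := by
  have hB := hX.1
  obtain ⟨a, ha, h₁, e₁⟩ := hB.exists_vertex_perim_ge hx' y' z'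
  obtain ⟨b, hb, h₂, e₂⟩ := hB.exists_vertex_perim_ge hy' z' a
  obtain ⟨c, hc, h₃, e₃⟩ := hB.exists_vertex_perim_ge hz' a b
  have := perim_rotate a y' z'
  have := perim_rotate b z' a
  have := perim_rotate c a b
  have h₄ := perim_le_of_mem ha hb hc
  refine ⟨by linarith, fun h => or_iff_not_imp_right.2 fun hcol => ?_⟩
  exact insert_eq_of_perim_eq hcol ((e₁ (by linarith)).resolve_right hcol)
    ((e₂ (by linarith)).resolve_right hcol) ((e₃ (by linarith)).resolve_right hcol) h
end

section
/- Let (𝒮,d) be a Busemann surface and let x,y,u,v be four points of 𝒮 such that the geodesic segments [x,y] and [u,v] have a common point (i.e., there exists z with d(x,z)+d(z,y)=d(x,y) and d(u,z)+d(z,v)=d(u,v)). Then max{ d(x,u)+d(y,v), d(x,v)+d(y,u) } ≤ d(x,y) + d(u,v). -/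
open Metric Set

/-- the quadrangle condition on Busemann surfaces. -/
theorem quadrangle_condition {X : Type*} [MetricSpace X]
    (hX : IsBusemannSurface X) (x y u v : X)
    (h : ∃ z, z ∈ seg x y ∧ z ∈ seg u v) :
    max (dist x u + dist y v) (dist x v + dist y u) ≤ dist x y + dist u v := by
  obtain ⟨z, hz1, hz2⟩ := h
  simp only [seg, Set.mem_setOf_eq] at hz1 hz2
  have h1 := dist_triangle x z u
  have h2 := dist_triangle y z v
  have h3 := dist_triangle x z v
  have h4 := dist_triangle y z u
  have e1 : dist z y = dist y z := dist_comm z y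
  have e2 : dist z v = dist v z := dist_comm z v
  apply max_le <;> nlinarith [dist_comm z u, dist_comm z v, dist_comm z y]
end

section
/- Let (𝒮,d) be a Busemann surface, let x,y,z ∈ 𝒮, and let u ∈ 𝒮 with u ∉ Δ(x,y,z). Then every point p ∈ St_u(x,y,z) \ Δ(x,y,z) is contained in at least two of the three shades Sh_u(x,y), Sh_u(y,z), and Sh_u(x,z). -/
open Metric Set

section MyHelpers

variable {X : Type*} [MetricSpace X]

lemma my_left_mem_seg (x y : X) : x ∈ seg x y := by
  show dist x x + dist x y = dist x y
  simp

lemma my_right_mem_seg (x y : X) : y ∈ seg x y := by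
  show dist x y + dist y y = dist x y
  simp

lemma my_seg_comm (x y : X) : seg x y = seg y x := by
  ext w
  simp only [seg, Set.mem_setOf_eq]
  rw [dist_comm x w, dist_comm w y, dist_comm x y]
  constructor <;> intro h <;> linarith

lemma my_subset_gHull (Q : Set X) : Q ⊆ gHull Q := by
  intro a ha
  rw [gHull, Set.mem_sInter]
  exact fun C hC => hC.2 ha

lemma my_gconvex_gHull (Q : Set X) : GConvex (gHull Q) := by
  intro a ha b hb w hw
  rw [gHull, Set.mem_sInter] at *
  intro C hC
  exact hC.1 a (ha C hC) b (hb C hC) hw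

lemma my_tri_perm (x y z : X) : triangleG x y z = triangleG y z x := by
  have h : ({x, y, z} : Set X) = {y, z, x} := by
    ext w
    simp only [Set.mem_insert_iff, Set.mem_singleton_iff]
    tauto
  unfold triangleG
  rw [h]

lemma my_busemann_unique (hB : IsBusemannSpace X) {γ γ' : ℝ → X} {l : ℝ} (hl : 0 ≤ l)
    (h : IsGeodesicMap γ l) (h' : IsGeodesicMap γ' l)
    (h0 : γ 0 = γ' 0) (h1 : γ l = γ' l) : ∀ t ∈ Set.Icc (0:ℝ) l, γ t = γ' t := by
  intro t ht
  rcases eq_or_lt_of_le hl with rfl | hl'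
  · obtain rfl : t = 0 := le_antisymm ht.2 ht.1
    exact h0
  · have key := hB.2 γ γ' l l hl hl h h' (t / l)
      ⟨div_nonneg ht.1 hl, by rw [div_le_one hl']; exact ht.2⟩
    rw [div_mul_cancel₀ _ (ne_of_gt hl')] at key
    have e0 : dist (γ 0) (γ' 0) = 0 := by rw [h0, dist_self]
    have e1 : dist (γ l) (γ' l) = 0 := by rw [h1, dist_self]
    rw [e0, e1] at key
    have hle : dist (γ t) (γ' t) ≤ 0 := by linarith [key]
    exact dist_le_zero.mp hle

lemma my_exists_param (hB : IsBusemannSpace X) {γ : ℝ → X} {l : ℝ} (hl : 0 ≤ l)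
    (hγ : IsGeodesicMap γ l) {w : X} (hw : w ∈ seg (γ 0) (γ l)) :
    ∃ t ∈ Set.Icc (0:ℝ) l, γ t = w := by
  have hd : dist (γ 0) (γ l) = l := by
    have h := hγ 0 ⟨le_refl 0, hl⟩ l ⟨hl, le_refl l⟩
    rw [h, abs_of_nonpos (by linarith)]; ring
  have hsum0 : dist (γ 0) w + dist w (γ l) = dist (γ 0) (γ l) := hw
  obtain ⟨α, hα, hα0, hα1⟩ := hB.1 (γ 0) w
  obtain ⟨β, hβ, hβ0, hβ1⟩ := hB.1 w (γ l)
  set d1 := dist (γ 0) w with hd1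
  set d2 := dist w (γ l) with hd2
  have hsum : d1 + d2 = l := by rw [hd] at hsum0; exact hsum0
  have h1 : 0 ≤ d1 := dist_nonneg
  have h2 : 0 ≤ d2 := dist_nonneg
  have hd1l : d1 ≤ l := by linarith
  set δ : ℝ → X := fun s => if s ≤ d1 then α s else β (s - d1) with hδdef
  have hδ0 : δ 0 = γ 0 := by simp only [hδdef, if_pos h1]; exact hα0
  have hδd1 : δ d1 = w := by simp only [hδdef, if_pos (le_refl d1)]; exact hα1
  have hδ1 : δ l = γ l := by
    rcases lt_or_ge d1 l with hlt | hle
    · simp only [hδdef, if_neg (not_le.mpr hlt)]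
      have he : l - d1 = d2 := by linarith
      rw [he]; exact hβ1
    · have he : d1 = l := le_antisymm hd1l hle
      have hz : dist w (γ l) = 0 := by rw [← hd2]; linarith
      have hw2 : w = γ l := dist_eq_zero.mp hz
      simp only [hδdef, if_pos hle]
      conv_lhs => rw [← he]
      exact hα1.trans hw2
  have hmono : ∀ s ∈ Set.Icc (0:ℝ) l, ∀ t ∈ Set.Icc (0:ℝ) l, s ≤ t →
      dist (δ s) (δ t) = t - s := by
    intro s hs t ht hst
    by_cases hta : t ≤ d1
    · have hsa : s ≤ d1 := le_trans hst hta
      simp only [hδdef, if_pos hsa, if_pos hta]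
      rw [hα s ⟨hs.1, hsa⟩ t ⟨le_trans hs.1 hst, hta⟩, abs_of_nonpos (by linarith)]; ring
    · push_neg at hta
      by_cases hsa : s ≤ d1
      · simp only [hδdef, if_pos hsa, if_neg (not_le.mpr hta)]
        have htd : t - d1 ≤ d2 := by linarith [ht.2]
        have hub : dist (α s) (β (t - d1)) ≤ t - s := by
          calc dist (α s) (β (t - d1)) ≤ dist (α s) w + dist w (β (t - d1)) :=
                dist_triangle _ _ _
            _ = (d1 - s) + (t - d1) := by
                have ea : dist (α s) w = d1 - s := by
                  rw [← hα1, hα s ⟨hs.1, hsa⟩ d1 ⟨h1, le_refl d1⟩,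
                    abs_of_nonpos (by linarith)]
                  ring
                have eb : dist w (β (t - d1)) = t - d1 := by
                  rw [← hβ0, hβ 0 ⟨le_refl 0, h2⟩ (t - d1) ⟨by linarith, htd⟩,
                    abs_of_nonpos (by linarith)]
                  ring
                rw [ea, eb]
            _ = t - s := by ring
        have hlb : t - s ≤ dist (α s) (β (t - d1)) := by
          have t4 : dist (γ 0) (γ l) ≤
              dist (γ 0) (α s) + dist (α s) (β (t - d1)) + dist (β (t - d1)) (γ l) :=
            dist_triangle4 _ _ _ _
          have e1 : dist (γ 0) (α s) = s := by
            rw [← hα0, hα 0 ⟨le_refl 0, h1⟩ s ⟨hs.1, hsa⟩, abs_of_nonpos (by linarith [hs.1])]; ring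
          have e2 : dist (β (t - d1)) (γ l) = l - t := by
            rw [← hβ1, hβ (t - d1) ⟨by linarith, htd⟩ d2 ⟨h2, le_refl d2⟩,
              abs_of_nonpos (by linarith [ht.2])]
            linarith
          rw [hd, e1, e2] at t4; linarith
        exact le_antisymm hub hlb
      · push_neg at hsa
        simp only [hδdef, if_neg (not_le.mpr hsa), if_neg (not_le.mpr hta)]
        rw [hβ (s - d1) ⟨by linarith, by linarith [hs.2]⟩ (t - d1) ⟨by linarith, by linarith [ht.2]⟩,
          abs_of_nonpos (by linarith)]
        ring
  have hδgeo : IsGeodesicMap δ l := by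
    intro s hs t ht
    rcases le_total s t with h | h
    · rw [hmono s hs t ht h, abs_of_nonpos (by linarith)]; ring
    · rw [dist_comm, hmono t ht s hs h, abs_of_nonneg (by linarith)]
  have huni := my_busemann_unique hB hl hδgeo hγ hδ0 hδ1 d1 ⟨h1, hd1l⟩
  exact ⟨d1, ⟨h1, hd1l⟩, by rw [← huni]; exact hδd1⟩

lemma my_exists_param_iso_le (hB : IsBusemannSpace X) {γ : ℝ → X} (hiso : Isometry γ)
    {a b : ℝ} (hab : a ≤ b) {w : X} (hw : w ∈ seg (γ a) (γ b)) :
    ∃ t ∈ Set.Icc a b, γ t = w := by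
  have hgeo : IsGeodesicMap (fun s => γ (a + s)) (b - a) := by
    intro s _ t _
    rw [hiso.dist_eq, Real.dist_eq]
    congr 1; ring
  have h0 : (fun s => γ (a + s)) 0 = γ a := by simp
  have h1 : (fun s => γ (a + s)) (b - a) = γ b := by simp
  obtain ⟨t, ht, hte⟩ := my_exists_param hB (by linarith) hgeo (w := w)
    (by rw [show a + (0:ℝ) = a by ring, show a + (b - a) = b by ring]; exact hw)
  exact ⟨a + t, ⟨by linarith [ht.1], by linarith [ht.2]⟩, hte⟩

lemma my_exists_param_iso (hB : IsBusemannSpace X) {γ : ℝ → X} (hiso : Isometry γ)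
    (a b : ℝ) {w : X} (hw : w ∈ seg (γ a) (γ b)) :
    ∃ t ∈ Set.Icc (min a b) (max a b), γ t = w := by
  rcases le_total a b with h | h
  · rw [min_eq_left h, max_eq_right h]; exact my_exists_param_iso_le hB hiso h hw
  · rw [min_eq_right h, max_eq_left h]
    rw [my_seg_comm] at hw
    exact my_exists_param_iso_le hB hiso h hw

lemma my_geodesic_continuousOn {γ : ℝ → X} {l : ℝ} (hγ : IsGeodesicMap γ l) :
    ContinuousOn γ (Set.Icc 0 l) := by
  have hlip : LipschitzOnWith 1 γ (Set.Icc 0 l) := by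
    apply LipschitzOnWith.of_dist_le_mul
    intro s hs t ht
    rw [hγ s hs t ht, Real.dist_eq]
    simp
  exact hlip.continuousOn

lemma my_cross (hG : IsGeodesicSpace X) (L : Set X) (a b : X)
    (hab : connectedComponentIn Lᶜ a ≠ connectedComponentIn Lᶜ b) :
    ∃ r ∈ seg a b, r ∈ L := by
  obtain ⟨γ, hγ, h0, h1⟩ := hG a b
  by_contra hc
  push_neg at hc
  have hTs : ∀ t ∈ Set.Icc (0:ℝ) (dist a b), γ t ∈ seg a b := by
    intro t ht
    have e1 : dist a (γ t) = t := by
      conv_lhs => rw [← h0]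
      rw [hγ 0 ⟨le_refl 0, dist_nonneg⟩ t ht, abs_of_nonpos (by linarith [ht.1])]
      ring
    have e2 : dist (γ t) b = dist a b - t := by
      conv_lhs => rw [← h1]
      rw [hγ t ht (dist a b) ⟨dist_nonneg, le_refl _⟩, abs_of_nonpos (by linarith [ht.2])]
      ring
    show dist a (γ t) + dist (γ t) b = dist a b
    rw [e1, e2]; ring
  have hTF : γ '' Set.Icc 0 (dist a b) ⊆ Lᶜ := by
    rintro r ⟨t, ht, rfl⟩
    exact hc (γ t) (hTs t ht)
  have hpre : IsPreconnected (γ '' Set.Icc 0 (dist a b)) :=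
    isPreconnected_Icc.image γ (my_geodesic_continuousOn hγ)
  have haT : a ∈ γ '' Set.Icc 0 (dist a b) := ⟨0, ⟨le_refl 0, dist_nonneg⟩, h0⟩
  have hbT : b ∈ γ '' Set.Icc 0 (dist a b) := ⟨dist a b, ⟨dist_nonneg, le_refl _⟩, h1⟩
  have hsub := hpre.subset_connectedComponentIn haT hTF
  exact hab (connectedComponentIn_eq (hsub hbT))

lemma my_halfplane_ne {L : Set X} {v w : X} (hv : v ∉ L)
    (h : connectedComponentIn Lᶜ v ≠ connectedComponentIn Lᶜ w) :
    connectedComponentIn Lᶜ v ∪ L ≠ connectedComponentIn Lᶜ w ∪ L := by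
  intro he
  have hvm : v ∈ connectedComponentIn Lᶜ w ∪ L :=
    he ▸ (Or.inl (mem_connectedComponentIn hv))
  rcases hvm with h' | h'
  · exact h (connectedComponentIn_eq h').symm
  · exact hv h'

lemma my_halfplane_eq_of_mem {L H : Set X} (hH : IsHalfplane L H) {v : X}
    (hv : v ∈ H) (hvL : v ∉ L) : H = connectedComponentIn Lᶜ v ∪ L := by
  obtain ⟨w, hw, rfl⟩ := hH
  rcases hv with h | h
  · rw [connectedComponentIn_eq h]
  · exact absurd h hvL

lemma my_line_subset_halfplane {L H : Set X} (hH : IsHalfplane L H) : L ⊆ H := by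
  obtain ⟨w, hw, rfl⟩ := hH
  exact Set.subset_union_right

end MyHelpers
lemma my_shade_step {X : Type*} [MetricSpace X] (hB : IsBusemannSpace X)
    (u x y z p : X) (hu : u ∉ triangleG x y z) (hp : p ∉ triangleG x y z)
    (hs : p ∈ Shade u x y) : p ∈ Shade u y z ∨ p ∈ Shade u z x := by
  obtain ⟨⟨q, hq_up, hq_xy⟩, L, ⟨γ, hiso, rfl⟩, ⟨a, rfl⟩, ⟨b, rfl⟩,
    H₁, H₂, hH₁, hH₂, hne, hx1, hy2⟩ := hs
  have hxΔ : x ∈ triangleG x y z := my_subset_gHull _ (by simp)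
  have hyΔ : y ∈ triangleG x y z := my_subset_gHull _ (by simp)
  have hzΔ : z ∈ triangleG x y z := my_subset_gHull _ (by simp)
  have hconv : GConvex (triangleG x y z) := my_gconvex_gHull _
  have hqΔ : q ∈ triangleG x y z := hconv x hxΔ y hyΔ hq_xy
  -- q lies on the line between parameters a and b
  obtain ⟨c, hc, hqc⟩ := my_exists_param_iso hB hiso a b hq_up
  -- the key containment : every point of the line inside the triangle is on seg u p
  have hJ : ∀ s₁ s₂ s : ℝ, γ s₁ ∈ triangleG x y z → γ s₂ ∈ triangleG x y z →
      s₁ ≤ s → s ≤ s₂ → γ s ∈ triangleG x y z := by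
    intro s₁ s₂ s h₁ h₂ hs1 hs2
    have hseg : γ s ∈ seg (γ s₁) (γ s₂) := by
      show dist (γ s₁) (γ s) + dist (γ s) (γ s₂) = dist (γ s₁) (γ s₂)
      rw [hiso.dist_eq, hiso.dist_eq, hiso.dist_eq, Real.dist_eq, Real.dist_eq, Real.dist_eq,
        abs_of_nonpos (by linarith), abs_of_nonpos (by linarith), abs_of_nonpos (by linarith)]
      ring
    exact hconv _ h₁ _ h₂ hseg
  have hminΔ : γ (min a b) ∉ triangleG x y z := by
    rcases min_cases a b with ⟨h, _⟩ | ⟨h, _⟩ <;> rw [h] <;> assumption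
  have hmaxΔ : γ (max a b) ∉ triangleG x y z := by
    rcases max_cases a b with ⟨h, _⟩ | ⟨h, _⟩ <;> rw [h] <;> assumption
  have hcΔ : γ c ∈ triangleG x y z := by rw [hqc]; exact hqΔ
  have hkey : ∀ t : ℝ, γ t ∈ triangleG x y z → γ t ∈ seg (γ a) (γ b) := by
    intro t ht
    have h1 : min a b ≤ t := by
      by_contra hcon
      push_neg at hcon
      exact hminΔ (hJ t c (min a b) ht hcΔ hcon.le hc.1)
    have h2 : t ≤ max a b := by
      by_contra hcon
      push_neg at hcon
      exact hmaxΔ (hJ c t (max a b) hcΔ ht hc.2 hcon.le)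
    show dist (γ a) (γ t) + dist (γ t) (γ b) = dist (γ a) (γ b)
    rw [hiso.dist_eq, hiso.dist_eq, hiso.dist_eq, Real.dist_eq, Real.dist_eq, Real.dist_eq]
    rcases le_total a b with h | h
    · rw [min_eq_left h] at h1; rw [max_eq_right h] at h2
      rw [abs_of_nonpos (by linarith), abs_of_nonpos (by linarith),
        abs_of_nonpos (by linarith)]
      ring
    · rw [min_eq_right h] at h1; rw [max_eq_left h] at h2
      rw [abs_of_nonneg (by linarith), abs_of_nonneg (by linarith),
        abs_of_nonneg (by linarith)]
      ring
  have hkey' : ∀ w : X, w ∈ Set.range γ → w ∈ triangleG x y z → w ∈ seg (γ a) (γ b) := by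
    rintro w ⟨t, rfl⟩ hw
    exact hkey t hw
  have hL1 : (Set.range γ) ⊆ H₁ := my_line_subset_halfplane hH₁
  have hL2 : (Set.range γ) ⊆ H₂ := my_line_subset_halfplane hH₂
  have hline : IsGeodesicLine (Set.range γ) := ⟨γ, hiso, rfl⟩
  by_cases hzL : z ∈ Set.range γ
  · -- z on the line : p ∈ Shade u y z
    left
    refine ⟨⟨z, ?_, my_right_mem_seg y z⟩, Set.range γ, hline, ⟨a, rfl⟩, ⟨b, rfl⟩,
      H₂, H₁, hH₂, hH₁, hne.symm, ?_, ?_⟩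
    · exact hkey' z hzL hzΔ
    · intro w hw; rw [hw]; exact hy2 rfl
    · intro w hw; rw [hw]; exact hL1 hzL
  · by_cases hxL : x ∈ Set.range γ
    · -- x on the line : p ∈ Shade u z x
      right
      have hzmem : z ∈ connectedComponentIn (Set.range γ)ᶜ z := mem_connectedComponentIn hzL
      have hHz : IsHalfplane (Set.range γ) (connectedComponentIn (Set.range γ)ᶜ z ∪ Set.range γ) :=
        ⟨z, hzL, rfl⟩
      by_cases hH1z : H₁ = connectedComponentIn (Set.range γ)ᶜ z ∪ Set.range γ
      · refine ⟨⟨x, hkey' x hxL hxΔ, my_right_mem_seg z x⟩, Set.range γ, hline, ⟨a, rfl⟩, ⟨b, rfl⟩,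
          _, H₂, hHz, hH₂, ?_, ?_, ?_⟩
        · rw [← hH1z]; exact hne
        · intro w hw; rw [hw]; exact Or.inl hzmem
        · intro w hw; rw [hw]; exact hL2 hxL
      · refine ⟨⟨x, hkey' x hxL hxΔ, my_right_mem_seg z x⟩, Set.range γ, hline, ⟨a, rfl⟩, ⟨b, rfl⟩,
          _, H₁, hHz, hH₁, fun hcon => hH1z hcon.symm, ?_, ?_⟩
        · intro w hw; rw [hw]; exact Or.inl hzmem
        · intro w hw; rw [hw]; exact hL1 hxL
    · by_cases hcxz : connectedComponentIn (Set.range γ)ᶜ x = connectedComponentIn (Set.range γ)ᶜ z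
      · by_cases hyL : y ∈ Set.range γ
        · -- y on the line : p ∈ Shade u y z
          left
          have hzmem : z ∈ connectedComponentIn (Set.range γ)ᶜ z := mem_connectedComponentIn hzL
          have hHz : IsHalfplane (Set.range γ)
              (connectedComponentIn (Set.range γ)ᶜ z ∪ Set.range γ) := ⟨z, hzL, rfl⟩
          by_cases hH1z : H₁ = connectedComponentIn (Set.range γ)ᶜ z ∪ Set.range γ
          · refine ⟨⟨y, hkey' y hyL hyΔ, my_left_mem_seg y z⟩, Set.range γ, hline,
              ⟨a, rfl⟩, ⟨b, rfl⟩, H₂, _, hH₂, hHz, ?_, ?_, ?_⟩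
            · rw [← hH1z]; exact hne.symm
            · intro w hw; rw [hw]; exact hy2 rfl
            · intro w hw; rw [hw]; exact Or.inl hzmem
          · refine ⟨⟨y, hkey' y hyL hyΔ, my_left_mem_seg y z⟩, Set.range γ, hline,
              ⟨a, rfl⟩, ⟨b, rfl⟩, H₁, _, hH₁, hHz, fun hcon => hH1z hcon, ?_, ?_⟩
            · intro w hw; rw [hw]; exact hL1 hyL
            · intro w hw; rw [hw]; exact Or.inl hzmem
        · by_cases hcyz : connectedComponentIn (Set.range γ)ᶜ y
              = connectedComponentIn (Set.range γ)ᶜ z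
          · -- contradiction : x and y in the same component
            exfalso
            have e1 : H₁ = connectedComponentIn (Set.range γ)ᶜ x ∪ Set.range γ :=
              my_halfplane_eq_of_mem hH₁ (hx1 rfl) hxL
            have e2 : H₂ = connectedComponentIn (Set.range γ)ᶜ y ∪ Set.range γ :=
              my_halfplane_eq_of_mem hH₂ (hy2 rfl) hyL
            exact hne (by rw [e1, e2, hcxz, hcyz])
          · -- cross seg y z : p ∈ Shade u y z
            left
            obtain ⟨r, hr_seg, hr_L⟩ := my_cross hB.1 (Set.range γ) y z hcyz
            have hrΔ : r ∈ triangleG x y z := hconv y hyΔ z hzΔ hr_seg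
            refine ⟨⟨r, hkey' r hr_L hrΔ, hr_seg⟩, Set.range γ, hline, ⟨a, rfl⟩, ⟨b, rfl⟩,
              _, _, ⟨y, hyL, rfl⟩, ⟨z, hzL, rfl⟩, my_halfplane_ne hyL hcyz, ?_, ?_⟩
            · intro w hw; rw [hw]; exact Or.inl (mem_connectedComponentIn hyL)
            · intro w hw; rw [hw]; exact Or.inl (mem_connectedComponentIn hzL)
      · -- cross seg z x : p ∈ Shade u z x
        right
        obtain ⟨r, hr_seg, hr_L⟩ := my_cross hB.1 (Set.range γ) z x (fun h => hcxz h.symm)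
        have hrΔ : r ∈ triangleG x y z := hconv z hzΔ x hxΔ hr_seg
        refine ⟨⟨r, hkey' r hr_L hrΔ, hr_seg⟩, Set.range γ, hline, ⟨a, rfl⟩, ⟨b, rfl⟩,
          _, _, ⟨z, hzL, rfl⟩, ⟨x, hxL, rfl⟩, my_halfplane_ne hzL (fun h => hcxz h.symm), ?_, ?_⟩
        · intro w hw; rw [hw]; exact Or.inl (mem_connectedComponentIn hzL)
        · intro w hw; rw [hw]; exact Or.inl (mem_connectedComponentIn hxL)

/-- a point of the shade of a triangle lying outside the triangle
belongs to at least two of the shades of its sides. -/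
theorem mem_two_shades_of_mem_triShade {X : Type*} [MetricSpace X]
    (hX : IsBusemannSurface X) (u x y z : X) (hu : u ∉ triangleG x y z)
    (p : X) (hp : p ∈ TriShade u x y z \ triangleG x y z) :
    (p ∈ Shade u x y ∧ p ∈ Shade u y z) ∨
    (p ∈ Shade u y z ∧ p ∈ Shade u z x) ∨
    (p ∈ Shade u x y ∧ p ∈ Shade u z x) := by
  obtain ⟨hmem, hpΔ⟩ := hp
  have hB := hX.1
  have e1 : triangleG x y z = triangleG y z x := my_tri_perm x y z
  have e2 : triangleG x y z = triangleG z x y := by rw [my_tri_perm x y z, my_tri_perm y z x]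
  rcases hmem with (h | h) | h
  · rcases my_shade_step hB u x y z p hu hpΔ h with h' | h'
    · exact Or.inl ⟨h, h'⟩
    · exact Or.inr (Or.inr ⟨h, h'⟩)
  · rcases my_shade_step hB u y z x p (e1 ▸ hu) (e1 ▸ hpΔ) h with h' | h'
    · exact Or.inr (Or.inl ⟨h, h'⟩)
    · exact Or.inl ⟨h', h⟩
  · rcases my_shade_step hB u z x y p (e2 ▸ hu) (e2 ▸ hpΔ) h with h' | h'
    · exact Or.inr (Or.inr ⟨h', h⟩)
    · exact Or.inr (Or.inl ⟨h', h⟩)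
end

section
/- Let (𝒮,d) be a Busemann surface, let δ > 0, and let x, x', w, v be four points in convex position (none of the four points lies in the convex hull of the other three) with d(x,x') ≤ 2δ, d(x',w) ≤ 2δ, d(w,v) ≤ 2δ, and d(v,x) ≤ 2δ. Let p, q, r, s be the midpoints of the geodesic segments [x,x'], [x',w], [w,v], [v,x], respectively. Then the convex hull of {x, x', w, v} is contained in B_δ(p) ∪ B_δ(q) ∪ B_δ(r) ∪ B_δ(s); in particular it can be covered by 4 closed balls of radius δ. -/
open Metric Set

/-!
Label the vertices `v 0, …, v 3` cyclically and fix arclength geodesics `γ i` along the sides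
`[v i, v (i + 1)]`. For weights `w` in the standard simplex, compare a point `z` with the point at
fraction `w (i + 1) + w (i + 2)` along side `i`, allowing the distance
`w (i + 2) * |v (i + 2) v (i + 1)| + w (i + 3) * |v (i + 3) v i|`, the cost of moving the weights
of the two other vertices to the nearer end of the side. The vertices pass all four comparisons
with unit weights, and by Busemann convexity the points passing them for some `w` form a convex
set, which therefore contains the hull. Such a point is within
`2δ * (w (i + 2) + w (i + 3) + |w (i + 1) + w (i + 2) - 1 / 2|)` of the midpoint of side `i`, and
one of these four quantities is at most `δ`.
-/

namespace IsGeodesicMap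

variable {X : Type*} [MetricSpace X] {γ : ℝ → X} {L : ℝ}

lemma of_dist_le (hle : ∀ s ∈ Icc 0 L, ∀ t ∈ Icc 0 L, s ≤ t → dist (γ s) (γ t) ≤ t - s)
    (hends : L ≤ dist (γ 0) (γ L)) : IsGeodesicMap γ L := by
  have key : ∀ s ∈ Icc 0 L, ∀ t ∈ Icc 0 L, s ≤ t → dist (γ s) (γ t) = t - s := by
    intro s hs t ht hst
    have h0 : (0 : ℝ) ∈ Icc 0 L := ⟨le_rfl, hs.1.trans hs.2⟩
    have hL : L ∈ Icc 0 L := ⟨h0.2, le_rfl⟩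
    have := dist_triangle4 (γ 0) (γ s) (γ t) (γ L)
    linarith [hle 0 h0 s hs hs.1, hle t ht L hL ht.2, hle s hs t ht hst]
  intro s hs t ht
  rcases le_total s t with hst | hts
  · rw [key s hs t ht hst, abs_of_nonpos (by linarith), neg_sub]
  · rw [dist_comm, key t ht s hs hts, abs_of_nonneg (by linarith)]

lemma reverse (hγ : IsGeodesicMap γ L) : IsGeodesicMap (fun s ↦ γ (L - s)) L := by
  intro s hs t ht
  rw [hγ _ ⟨by linarith [hs.2], by linarith [hs.1]⟩ _ ⟨by linarith [ht.2], by linarith [ht.1]⟩,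
    ← abs_neg]
  ring_nf

lemma shift (hγ : IsGeodesicMap γ L) {u₁ u₂ : ℝ} (hu₁ : 0 ≤ u₁) (hu₂ : u₂ ≤ L) :
    IsGeodesicMap (fun s ↦ γ (u₁ + s)) (u₂ - u₁) := by
  intro s hs t ht
  rw [hγ _ ⟨by linarith [hs.1], by linarith [hs.2]⟩ _ ⟨by linarith [ht.1], by linarith [ht.2]⟩]
  ring_nf

lemma dist_apply_mul_half (hγ : IsGeodesicMap γ L) (hL : 0 ≤ L) {t : ℝ} (ht : t ∈ Icc (0 : ℝ) 1) :
    dist (γ (t * L)) (γ (L / 2)) = |t - 1 / 2| * L := by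
  rw [hγ _ ⟨by nlinarith [ht.1], by nlinarith [ht.2]⟩ _ ⟨by linarith, by linarith⟩,
    ← abs_of_nonneg hL, ← abs_mul, abs_of_nonneg hL]
  ring_nf

end IsGeodesicMap

section

variable {X : Type*} [MetricSpace X]

lemma IsGeodesicSpace.exists_geodesic_through (hG : IsGeodesicSpace X) {z₁ z₂ z : X}
    (hz : z ∈ seg z₁ z₂) :
    ∃ σ : ℝ → X, IsGeodesicMap σ (dist z₁ z₂) ∧ σ 0 = z₁ ∧ σ (dist z₁ z₂) = z₂ ∧
      σ (dist z₁ z) = z := by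
  obtain ⟨σ₁, hσ₁, hσ₁0, hσ₁1⟩ := hG z₁ z
  obtain ⟨σ₂, hσ₂, hσ₂0, hσ₂1⟩ := hG z z₂
  have hz : dist z₁ z + dist z z₂ = dist z₁ z₂ := hz
  set d₁ := dist z₁ z
  set d₂ := dist z z₂
  have hd₁ : 0 ≤ d₁ := dist_nonneg
  have hd₂ : 0 ≤ d₂ := dist_nonneg
  let σ : ℝ → X := fun s ↦ if s ≤ d₁ then σ₁ s else σ₂ (s - d₁)
  have hσ_end : σ (dist z₁ z₂) = z₂ := by
    rcases hd₂.eq_or_lt with h | h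
    · have : z = z₂ := dist_eq_zero.1 h.symm
      simp only [σ, ← hz, ← h, add_zero, le_rfl, if_true, hσ₁1, this]
    · simp only [σ, ← hz, show ¬ d₁ + d₂ ≤ d₁ by linarith, if_false, add_sub_cancel_left, hσ₂1]
  refine ⟨σ, IsGeodesicMap.of_dist_le ?_ ?_, by simp [σ, hd₁, hσ₁0], hσ_end,
    by simp [σ, hσ₁1]⟩
  · rintro s ⟨hs0, hs1⟩ t ⟨ht0, ht1⟩ hst
    by_cases hsd : s ≤ d₁ <;> by_cases htd : t ≤ d₁ <;> simp only [σ, hsd, htd, if_true, if_false]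
    · rw [hσ₁ s ⟨hs0, hsd⟩ t ⟨ht0, htd⟩, abs_of_nonpos (by linarith), neg_sub]
    · calc dist (σ₁ s) (σ₂ (t - d₁)) ≤ dist (σ₁ s) (σ₁ d₁) + dist (σ₂ 0) (σ₂ (t - d₁)) := by
            rw [hσ₁1, ← hσ₂0]; exact dist_triangle _ _ _
        _ = t - s := by
            rw [hσ₁ s ⟨hs0, hsd⟩ d₁ ⟨hd₁, le_rfl⟩, hσ₂ 0 ⟨le_rfl, hd₂⟩ (t - d₁)
              ⟨by linarith, by linarith⟩, abs_of_nonpos (by linarith),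
              abs_of_nonpos (by linarith)]
            ring
    · exact absurd (hst.trans htd) hsd
    · rw [hσ₂ _ ⟨by linarith, by linarith⟩ _ ⟨by linarith, by linarith⟩,
        abs_of_nonpos (by linarith)]
      linarith
  · simp [σ, hd₁, hσ₁0, hσ_end]

end

namespace IsBusemannSpace

variable {X : Type*} [MetricSpace X]

lemma dist_le_of_isGeodesicMap (hB : IsBusemannSpace X) {σ γ : ℝ → X} {D L : ℝ}
    (hD : 0 ≤ D) (hσ : IsGeodesicMap σ D) (hγ : IsGeodesicMap γ L) {u₁ u₂ τ : ℝ}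
    (hu₁ : u₁ ∈ Icc 0 L) (hu₂ : u₂ ∈ Icc 0 L) (hτ : τ ∈ Icc (0 : ℝ) 1) :
    dist (σ (τ * D)) (γ ((1 - τ) * u₁ + τ * u₂)) ≤
      (1 - τ) * dist (σ 0) (γ u₁) + τ * dist (σ D) (γ u₂) := by
  wlog hu : u₁ ≤ u₂ generalizing γ u₁ u₂
  · have h := this hγ.reverse (u₁ := L - u₁) (u₂ := L - u₂)
      ⟨by linarith [hu₁.2], by linarith [hu₁.1]⟩ ⟨by linarith [hu₂.2], by linarith [hu₂.1]⟩
      (by linarith)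
    simp only [sub_sub_cancel] at h
    rwa [show L - ((1 - τ) * (L - u₁) + τ * (L - u₂)) = (1 - τ) * u₁ + τ * u₂ by ring] at h
  have h := hB.2 σ _ D (u₂ - u₁) hD (by linarith) hσ (hγ.shift hu₁.1 hu₂.2) τ hτ
  simp only [add_zero, add_sub_cancel] at h
  rwa [show u₁ + τ * (u₂ - u₁) = (1 - τ) * u₁ + τ * u₂ by ring] at h

lemma exists_dist_le_of_mem_seg (hB : IsBusemannSpace X) {z₁ z₂ z : X} (hz : z ∈ seg z₁ z₂) :
    ∃ τ ∈ Icc (0 : ℝ) 1, ∀ (γ : ℝ → X) (L : ℝ), 0 ≤ L → IsGeodesicMap γ L →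
      ∀ f₁ ∈ Icc (0 : ℝ) 1, ∀ f₂ ∈ Icc (0 : ℝ) 1,
        dist z (γ (((1 - τ) * f₁ + τ * f₂) * L)) ≤
          (1 - τ) * dist z₁ (γ (f₁ * L)) + τ * dist z₂ (γ (f₂ * L)) := by
  obtain ⟨σ, hσ, hσ0, hσ1, hσz⟩ := hB.1.exists_geodesic_through hz
  have hle : dist z₁ z ≤ dist z₁ z₂ := by
    have : dist z₁ z + dist z z₂ = dist z₁ z₂ := hz
    linarith [dist_nonneg (x := z) (y := z₂)]
  -- when `z₁ = z₂` the junk value `τ = 0` still satisfies `τ * dist z₁ z₂ = dist z₁ z`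
  have hτ : dist z₁ z / dist z₁ z₂ * dist z₁ z₂ = dist z₁ z := by
    rcases (dist_nonneg : 0 ≤ dist z₁ z₂).eq_or_lt with h | h
    · rw [← h, mul_zero]; linarith [dist_nonneg (x := z₁) (y := z)]
    · exact div_mul_cancel₀ _ h.ne'
  refine ⟨_, ⟨by positivity, div_le_one_of_le₀ hle dist_nonneg⟩, ?_⟩
  intro γ L hL hγ f₁ hf₁ f₂ hf₂
  have h := hB.dist_le_of_isGeodesicMap dist_nonneg hσ hγ (u₁ := f₁ * L) (u₂ := f₂ * L)
    ⟨by nlinarith [hf₁.1], by nlinarith [hf₁.2]⟩ ⟨by nlinarith [hf₂.1], by nlinarith [hf₂.2]⟩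
    ⟨by positivity, div_le_one_of_le₀ hle dist_nonneg⟩
  rw [hτ, hσz, hσ0, hσ1] at h
  convert h using 4
  ring

end IsBusemannSpace

section

variable {X : Type*} [MetricSpace X]

lemma gHull_min {Q C : Set X} (hC : GConvex C) (hQ : Q ⊆ C) : gHull Q ⊆ C :=
  sInter_subset_of_mem ⟨hC, hQ⟩

lemma IsBusemannSpace.gConvex_setOf_dist_le {ι E : Type*} [AddCommGroup E] [Module ℝ E]
    (hB : IsBusemannSpace X) {K : Set E} (hK : Convex ℝ K) {γ : ι → ℝ → X} {L : ι → ℝ}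
    (hL : ∀ i, 0 ≤ L i) (hγ : ∀ i, IsGeodesicMap (γ i) (L i)) {f g : ι → E →ₗ[ℝ] ℝ}
    (hf : ∀ i, ∀ w ∈ K, f i w ∈ Icc (0 : ℝ) 1) :
    GConvex {z | ∃ w ∈ K, ∀ i, dist z (γ i (f i w * L i)) ≤ g i w} := by
  rintro z₁ ⟨w₁, hw₁, h₁⟩ z₂ ⟨w₂, hw₂, h₂⟩ z hz
  obtain ⟨τ, ⟨hτ0, hτ1⟩, hdist⟩ := hB.exists_dist_le_of_mem_seg hz
  refine ⟨(1 - τ) • w₁ + τ • w₂, hK hw₁ hw₂ (by linarith) hτ0 (by ring), fun i ↦ ?_⟩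
  simp only [map_add, map_smul, smul_eq_mul]
  calc dist z (γ i (((1 - τ) * f i w₁ + τ * f i w₂) * L i))
      ≤ (1 - τ) * dist z₁ (γ i (f i w₁ * L i)) + τ * dist z₂ (γ i (f i w₂ * L i)) :=
        hdist _ _ (hL i) (hγ i) _ (hf i w₁ hw₁) _ (hf i w₂ hw₂)
    _ ≤ (1 - τ) * g i w₁ + τ * g i w₂ := by
        gcongr
        exacts [h₁ i, h₂ i]

end

lemma Fin.sum_univ_four_rotate {M : Type*} [AddCommMonoid M] (f : Fin 4 → M) (i : Fin 4) :
    ∑ j, f j = f i + f (i + 1) + f (i + 2) + f (i + 3) := by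
  rw [← Equiv.sum_comp (Equiv.addLeft i) f, Fin.sum_univ_four]
  simp

lemma exists_side_weight_le_half {w : Fin 4 → ℝ} (hw : w ∈ stdSimplex ℝ (Fin 4)) :
    ∃ i : Fin 4, w (i + 2) + w (i + 3) + |w (i + 1) + w (i + 2) - 1 / 2| ≤ 1 / 2 := by
  obtain ⟨h, hsum⟩ := hw
  rw [Fin.sum_univ_four] at hsum
  have := h 0; have := h 1; have := h 2; have := h 3
  have side : ∀ k : Fin 4, |w (k + 1) + w (k + 2) - 1 / 2| ≤ 1 / 2 - (w (k + 2) + w (k + 3)) →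
      ∃ i : Fin 4, w (i + 2) + w (i + 3) + |w (i + 1) + w (i + 2) - 1 / 2| ≤ 1 / 2 :=
    fun k hk ↦ ⟨k, by linarith⟩
  -- if `w 0 + w 1` and `w 1 + w 2` lie on the same side of `1 / 2`, comparing `w 0` with `w 2`
  -- picks the side; otherwise comparing `w 1` with `w 3` does
  rcases le_total (w 0 + w 1) (1 / 2) with hA | hA <;>
    rcases le_total (w 1 + w 2) (1 / 2) with hB | hB <;>
    rcases le_total (w 0) (w 2) with hac | hac <;>
    rcases le_total (w 1) (w 3) with hbe | hbe <;>
    first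
    | (apply side 0; rw [abs_le]; simp only [Fin.isValue, Fin.reduceAdd]; constructor <;> linarith)
    | (apply side 1; rw [abs_le]; simp only [Fin.isValue, Fin.reduceAdd]; constructor <;> linarith)
    | (apply side 2; rw [abs_le]; simp only [Fin.isValue, Fin.reduceAdd]; constructor <;> linarith)
    | (apply side 3; rw [abs_le]; simp only [Fin.isValue, Fin.reduceAdd]; constructor <;> linarith)

section Quadrilateral

variable {X : Type*} [MetricSpace X] (v : Fin 4 → X)

def quadSideWeight (i : Fin 4) : (Fin 4 → ℝ) →ₗ[ℝ] ℝ :=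
  (LinearMap.proj (i + 1) : (Fin 4 → ℝ) →ₗ[ℝ] ℝ) + LinearMap.proj (i + 2)

def quadSideSlack (i : Fin 4) : (Fin 4 → ℝ) →ₗ[ℝ] ℝ :=
  dist (v (i + 2)) (v (i + 1)) • LinearMap.proj (i + 2) +
    dist (v (i + 3)) (v i) • LinearMap.proj (i + 3)

def quadControlSet (γ : Fin 4 → ℝ → X) : Set X :=
  {z | ∃ w ∈ stdSimplex ℝ (Fin 4), ∀ i,
    dist z (γ i (quadSideWeight i w * dist (v i) (v (i + 1)))) ≤ quadSideSlack v i w}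

lemma quadSideWeight_mem_Icc {w : Fin 4 → ℝ} (hw : w ∈ stdSimplex ℝ (Fin 4)) (i : Fin 4) :
    quadSideWeight i w ∈ Icc (0 : ℝ) 1 := by
  obtain ⟨hw, hsum⟩ := hw
  rw [Fin.sum_univ_four_rotate w i] at hsum
  simp only [quadSideWeight, LinearMap.add_apply, LinearMap.proj_apply]
  constructor <;> linarith [hw i, hw (i + 1), hw (i + 2), hw (i + 3)]

variable {v} {γ : Fin 4 → ℝ → X}

lemma IsBusemannSpace.gConvex_quadControlSet (hB : IsBusemannSpace X)
    (hγ : ∀ i, IsGeodesicMap (γ i) (dist (v i) (v (i + 1)))) :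
    GConvex (quadControlSet v γ) :=
  hB.gConvex_setOf_dist_le (convex_stdSimplex ℝ (Fin 4)) (fun _ ↦ dist_nonneg) hγ
    fun i _ hw ↦ quadSideWeight_mem_Icc hw i

lemma range_subset_quadControlSet (hγ₀ : ∀ i, γ i 0 = v i)
    (hγ₁ : ∀ i, γ i (dist (v i) (v (i + 1))) = v (i + 1)) :
    range v ⊆ quadControlSet v γ := by
  rintro _ ⟨j, rfl⟩
  refine ⟨Pi.single j 1, single_mem_stdSimplex ℝ j, fun i ↦ ?_⟩
  obtain ⟨k, rfl⟩ : ∃ k, j = i + k := ⟨j - i, by abel⟩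
  fin_cases k <;> simp [quadSideWeight, quadSideSlack, hγ₀, hγ₁]

lemma quadControlSet_subset_iUnion_closedBall {δ : ℝ} {m : Fin 4 → X}
    (hside : ∀ i, dist (v i) (v (i + 1)) ≤ 2 * δ)
    (hγ : ∀ i, IsGeodesicMap (γ i) (dist (v i) (v (i + 1))))
    (hγm : ∀ i, γ i (dist (v i) (v (i + 1)) / 2) = m i) :
    quadControlSet v γ ⊆ ⋃ i, closedBall (m i) δ := by
  rintro z ⟨w, hw, hz⟩
  obtain ⟨i, hi⟩ := exists_side_weight_le_half hw
  have hδ : 0 ≤ δ := by linarith [hside i, dist_nonneg (x := v i) (y := v (i + 1))]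
  have h₂ : dist (v (i + 2)) (v (i + 1)) ≤ 2 * δ := by
    simpa [dist_comm, add_assoc, one_add_one_eq_two] using hside (i + 1)
  have h₃ : dist (v (i + 3)) (v i) ≤ 2 * δ := by
    simpa [add_assoc, show (3 : Fin 4) + 1 = 0 from rfl] using hside (i + 3)
  have hmid : dist (γ i (quadSideWeight i w * dist (v i) (v (i + 1)))) (m i) =
      |quadSideWeight i w - 1 / 2| * dist (v i) (v (i + 1)) := by
    rw [← hγm i, (hγ i).dist_apply_mul_half dist_nonneg (quadSideWeight_mem_Icc hw i)]
  refine mem_iUnion.2 ⟨i, ?_⟩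
  calc dist z (m i)
      ≤ quadSideSlack v i w + |quadSideWeight i w - 1 / 2| * dist (v i) (v (i + 1)) :=
        (dist_triangle _ _ _).trans (by rw [hmid]; exact add_le_add_left (hz i) _)
    _ ≤ 2 * δ * (w (i + 2) + w (i + 3) + |w (i + 1) + w (i + 2) - 1 / 2|) := by
        simp only [quadSideWeight, quadSideSlack, LinearMap.add_apply, LinearMap.smul_apply,
          LinearMap.proj_apply, smul_eq_mul]
        nlinarith [hw.1 (i + 2), hw.1 (i + 3), abs_nonneg (w (i + 1) + w (i + 2) - 1 / 2),
          hside i]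
    _ ≤ 2 * δ * (1 / 2) := mul_le_mul_of_nonneg_left hi (by linarith)
    _ = δ := by ring

end Quadrilateral

lemma IsBusemannSpace.gHull_subset_iUnion_closedBall_midpoint {X : Type*} [MetricSpace X]
    (hB : IsBusemannSpace X) {δ : ℝ} (v m : Fin 4 → X) (hside : ∀ i, dist (v i) (v (i + 1)) ≤ 2 * δ)
    (hm : ∀ i, dist (v i) (m i) = dist (v i) (v (i + 1)) / 2 ∧
      dist (m i) (v (i + 1)) = dist (v i) (v (i + 1)) / 2) :
    gHull (range v) ⊆ ⋃ i, closedBall (m i) δ := by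
  have hseg : ∀ i, m i ∈ seg (v i) (v (i + 1)) := fun i ↦ by
    show _ = _
    rw [(hm i).1, (hm i).2, add_halves]
  choose γ hγ hγ₀ hγ₁ hγm using fun i ↦ hB.1.exists_geodesic_through (hseg i)
  calc gHull (range v) ⊆ quadControlSet v γ :=
        gHull_min (hB.gConvex_quadControlSet hγ) (range_subset_quadControlSet hγ₀ hγ₁)
    _ ⊆ ⋃ i, closedBall (m i) δ :=
        quadControlSet_subset_iUnion_closedBall hside hγ fun i ↦ (hm i).1 ▸ hγm i

theorem quadrilateral_cover_four_balls_general {X : Type*} [MetricSpace X]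
    (hX : IsBusemannSurface X) (δ : ℝ) (x x' w v p q r s : X)
    (hxx' : dist x x' ≤ 2 * δ) (hx'w : dist x' w ≤ 2 * δ)
    (hwv : dist w v ≤ 2 * δ) (hvx : dist v x ≤ 2 * δ)
    (hp : dist x p = dist x x' / 2 ∧ dist p x' = dist x x' / 2)
    (hq : dist x' q = dist x' w / 2 ∧ dist q w = dist x' w / 2)
    (hr : dist w r = dist w v / 2 ∧ dist r v = dist w v / 2)
    (hs : dist v s = dist v x / 2 ∧ dist s x = dist v x / 2) :
    gHull {x, x', w, v} ⊆
      Metric.closedBall p δ ∪ Metric.closedBall q δ ∪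
      Metric.closedBall r δ ∪ Metric.closedBall s δ := by
  have hcover := hX.1.gHull_subset_iUnion_closedBall_midpoint ![x, x', w, v] ![p, q, r, s]
    (fun i ↦ by fin_cases i; exacts [hxx', hx'w, hwv, hvx])
    (fun i ↦ by fin_cases i; exacts [hp, hq, hr, hs])
  have hrange : range ![x, x', w, v] = {x, x', w, v} := by
    simp only [Matrix.range_cons, Matrix.range_empty, union_empty, singleton_union]
  intro z hz
  obtain ⟨i, hi⟩ := mem_iUnion.1 (hcover (hrange ▸ hz))
  fin_cases i <;> simp_all

/-- a convex quadrilateral with sides at most `2δ` is covered by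
the four `δ`-balls centered at the midpoints of its sides. -/
theorem quadrilateral_cover_four_balls {X : Type*} [MetricSpace X]
    (hX : IsBusemannSurface X) (δ : ℝ) (hδ : 0 < δ) (x x' w v p q r s : X)
    (hpos : x ∉ gHull {x', w, v} ∧ x' ∉ gHull {x, w, v} ∧
      w ∉ gHull {x, x', v} ∧ v ∉ gHull {x, x', w})
    (hxx' : dist x x' ≤ 2 * δ) (hx'w : dist x' w ≤ 2 * δ)
    (hwv : dist w v ≤ 2 * δ) (hvx : dist v x ≤ 2 * δ)
    (hp : dist x p = dist x x' / 2 ∧ dist p x' = dist x x' / 2)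
    (hq : dist x' q = dist x' w / 2 ∧ dist q w = dist x' w / 2)
    (hr : dist w r = dist w v / 2 ∧ dist r v = dist w v / 2)
    (hs : dist v s = dist v x / 2 ∧ dist s x = dist v x / 2) :
    gHull {x, x', w, v} ⊆
      Metric.closedBall p δ ∪ Metric.closedBall q δ ∪
      Metric.closedBall r δ ∪ Metric.closedBall s δ :=
  quadrilateral_cover_four_balls_general hX δ x x' w v p q r s hxx' hx'w hwv hvx hp hq hr hs
end
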